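/- arXiv:0811.4152 — 5 statements merged into one kernel-verified Lean document; each statement's English description precedes it below -/
import Mathlib

section
/- Fix a λ-chain (β₁,...,β_m) with associated affine reflections r̂_i = s_{β_i, l_i} and Weyl reflections r_i = s_{β_i}. Let (w,J) be a folding pair encoding an alcove walk Ω with fp(Ω) = J = {j₁ < ... < j_s} and unfold(Ω) = w(Π). Then the weight of Ω equals w(μ(J)), where μ(J) = r̂_{j₁}···r̂_{j_s}(λ). -/
/-!
Statement 5: Fix a λ-chain (β₁,…,β_m), i.e. a reduced alcove path Π from A° to the
alcove of the minimal element of τ_λ W, with affine reflections r̂_i = s_{β_i,l_i},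
l_i = #{j ≤ i : β_j = β_i}.  Let (w,J) be a folding pair encoding the alcove walk
Ω = φ_{j₁} ⋯ φ_{j_s}(w(Π)) with J = {j₁ < … < j_s}.  Then the weight of Ω (its final
vertex) equals w(μ(J)), where μ(J) = r̂_{j₁} ⋯ r̂_{j_s}(λ).
-/

namespace Stmt5



open scoped RealInnerProductSpace

/-- the ambient Euclidean space -/
abbrev V (n : ℕ) := EuclideanSpace ℝ (Fin n)

/-- the standard coroot α^∨ = 2α/⟨α,α⟩ -/
noncomputable def coroot {n : ℕ} (α : V n) : V n := (2 / (‖α‖ ^ 2)) • α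

/-- the pairing ⟨x, α^∨⟩ -/
noncomputable def cpair {n : ℕ} (x α : V n) : ℝ := ⟪x, coroot α⟫

/-- the affine hyperplane H_{α,k} = {x : ⟨x,α^∨⟩ = k} -/
def Hyp {n : ℕ} (α : V n) (k : ℝ) : Set (V n) := {x | cpair x α = k}

/-- the union of all affine hyperplanes of the arrangement -/
def allHyps {n : ℕ} (pos : Finset (V n)) : Set (V n) :=
  ⋃ α ∈ pos, ⋃ k : ℤ, Hyp α (k : ℝ)

/-- an alcove: a connected component of the complement of the hyperplane arrangement -/
def IsAlcove {n : ℕ} (pos : Finset (V n)) (A : Set (V n)) : Prop :=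
  ∃ x, x ∉ allHyps pos ∧ A = connectedComponentIn (allHyps pos)ᶜ x

/-- the fundamental alcove A° -/
def fundAlcove {n : ℕ} (pos : Finset (V n)) : Set (V n) :=
  {x | ∀ α ∈ pos, 0 < cpair x α ∧ cpair x α < 1}

/-- the affine reflection s_{α,k} -/
noncomputable def affRefl {n : ℕ} (α : V n) (k : ℝ) (x : V n) : V n :=
  x - (cpair x α - k) • α

/-- p lies on the hyperplane H_{α,k} and on no other hyperplane of the arrangement -/
def onlyOn {n : ℕ} (pos : Finset (V n)) (p α : V n) (k : ℝ) : Prop :=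
  cpair p α = k ∧
  ∀ β ∈ pos, ∀ l : ℤ, cpair p β = (l : ℝ) → Hyp β (l : ℝ) = Hyp α k

/-- A and B are adjacent alcoves with common wall H_{β,k}, and the root β points in the
direction from A to B -/
def AdjStep {n : ℕ} (pos : Finset (V n)) (A B : Set (V n)) (β : V n) (k : ℝ) : Prop :=
  IsAlcove pos A ∧ IsAlcove pos B ∧ B = affRefl β k '' A ∧
  (∀ a ∈ A, cpair a β < k) ∧ (∀ b ∈ B, k < cpair b β) ∧
  ∃ p, p ∈ closure A ∩ closure B ∧ onlyOn pos p β k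

/-- an alcove path with the given labels (roots and hyperplane levels) -/
def IsAlcovePath {n m : ℕ} (pos : Finset (V n)) (A : Fin (m + 1) → Set (V n))
    (β : Fin m → V n) (kk : Fin m → ℤ) : Prop :=
  ∀ i : Fin m, AdjStep pos (A i.castSucc) (A i.succ) (β i) ((kk i : ℝ))

/-- a reduced alcove path: of minimal length among all alcove paths with the same
endpoints -/
def IsReducedPath {n m : ℕ} (pos : Finset (V n)) (A : Fin (m + 1) → Set (V n))
    (β : Fin m → V n) (kk : Fin m → ℤ) : Prop :=
  IsAlcovePath pos A β kk ∧
  ∀ (m' : ℕ) (A' : Fin (m' + 1) → Set (V n)) (β' : Fin m' → V n) (kk' : Fin m' → ℤ),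
    IsAlcovePath pos A' β' kk' → A' 0 = A 0 → A' (Fin.last m') = A (Fin.last m) →
      m ≤ m'

/-- the finite Weyl group W, as a monoid of self-maps of V generated by the linear
reflections s_α (it is a group since the generators are involutions) -/
noncomputable def Wfin {n : ℕ} (pos : Finset (V n)) : Submonoid (Function.End (V n)) :=
  Submonoid.closure {g | ∃ α ∈ pos, g = affRefl α 0}

/-- translation by λ -/
def tau {n : ℕ} (lamv : V n) : Function.End (V n) := fun x => x + lamv

/-- H_{β,k} separates S and T -/
def SeparatesH {n : ℕ} (β : V n) (k : ℝ) (S T : Set (V n)) : Prop :=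
  ((∀ x ∈ S, cpair x β < k) ∧ (∀ y ∈ T, k < cpair y β)) ∨
  ((∀ x ∈ T, cpair x β < k) ∧ (∀ y ∈ S, k < cpair y β))

/-- the length of an affine Weyl group element: the number of affine hyperplanes
separating A° from g(A°) -/
noncomputable def lenAff {n : ℕ} (pos : Finset (V n)) (g : Function.End (V n)) : ℕ :=
  Set.ncard {q : V n × ℤ | q.1 ∈ pos ∧
    SeparatesH q.1 (q.2 : ℝ) (fundAlcove pos) (g '' fundAlcove pos)}

/-- v is the minimal-length element of the coset τ_λ W of the affine Weyl group -/
noncomputable def IsMinCoset {n : ℕ} (pos : Finset (V n)) (lamv : V n)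
    (v : Function.End (V n)) : Prop :=
  (∃ u ∈ Wfin pos, v = tau lamv * u) ∧
  ∀ v' : Function.End (V n), (∃ u ∈ Wfin pos, v' = tau lamv * u) →
    lenAff pos v ≤ lenAff pos v'
/-- the data of an alcove walk Ω = (A₀, F₁, A₁, …, F_m, A_m, F_∞): the alcoves, the
hyperplane data (root and level) of the codimension-one faces F₁,…,F_m, and the final
vertex F_∞. -/
structure Walk (n m : ℕ) where
  A : Fin (m + 1) → Set (V n)
  beta : Fin m → V n
  kk : Fin m → ℝ
  Finf : V n

/-- the walk conditions: each A_i is an alcove; F_i (contained in the hyperplane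
H_{β_i,k_i}) is a codimension-one common face of A_{i-1} and A_i (which are either equal
-- a folding -- or reflections of one another in that hyperplane); and F_∞ is a vertex
(an extreme point of the closure) of the last alcove. -/
def IsWalk {n m : ℕ} (pos : Finset (V n)) (Ω : Walk n m) : Prop :=
  (∀ j, IsAlcove pos (Ω.A j)) ∧
  (∀ t : Fin m,
    (Ω.A t.succ = Ω.A t.castSucc ∨
      Ω.A t.succ = affRefl (Ω.beta t) (Ω.kk t) '' Ω.A t.castSucc) ∧
    ∃ p, p ∈ closure (Ω.A t.castSucc) ∩ closure (Ω.A t.succ) ∧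
      onlyOn pos p (Ω.beta t) (Ω.kk t)) ∧
  Ω.Finf ∈ Set.extremePoints ℝ (closure (Ω.A (Fin.last m)))

/-- the folding operator φ_{t+1}: keep the initial segment of the walk up to A_t and
reflect the rest (alcoves, faces and final vertex) in the hyperplane H of the face F_{t+1};
the hyperplane data of the reflected faces is transported along the reflection. -/
noncomputable def fold {n m : ℕ} (t : Fin m) (Ω : Walk n m) : Walk n m where
  A := fun j => if (j : ℕ) ≤ (t : ℕ) then Ω.A j
    else affRefl (Ω.beta t) (Ω.kk t) '' Ω.A j
  beta := fun s => if (s : ℕ) ≤ (t : ℕ) then Ω.beta s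
    else Ω.beta s - (⟪Ω.beta s, coroot (Ω.beta t)⟫ : ℝ) • Ω.beta t
  kk := fun s => if (s : ℕ) ≤ (t : ℕ) then Ω.kk s
    else Ω.kk s - Ω.kk t * (⟪Ω.beta t, coroot (Ω.beta s)⟫ : ℝ)
  Finf := affRefl (Ω.beta t) (Ω.kk t) Ω.Finf

open Classical in
/-- the set of folding positions of a walk -/
noncomputable def fp {n m : ℕ} (Ω : Walk n m) : Finset (Fin m) :=
  Finset.univ.filter fun t => Ω.A t.castSucc = Ω.A t.succ

/-- unfold(Ω) = φ_{j₁} ⋯ φ_{j_s}(Ω), where fp(Ω) = {j₁ < … < j_s} -/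
noncomputable def unfoldW {n m : ℕ} (Ω : Walk n m) : Walk n m :=
  ((fp Ω).sort (· ≤ ·)).foldr fold Ω

/-
Folding at position `t` reflects the final vertex in the wall of the `t`-th face and leaves
the face data at positions `≤ t` untouched. Since `foldr` performs the folds in decreasing
order, the fold at `j` still sees the wall of `w(Π)` at `j`, namely `w r̂_j w⁻¹`; so the
conjugations telescope and the final vertex `w λ` becomes `w r̂_{j₁} ⋯ r̂_{j_s} λ`.
-/

namespace Walk

variable {n m : ℕ}

theorem fold_beta_of_le {t i : Fin m} (hi : i ≤ t) (Ω : Walk n m) :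
    (fold t Ω).beta i = Ω.beta i :=
  if_pos (show (i : ℕ) ≤ t from hi)

theorem fold_kk_of_le {t i : Fin m} (hi : i ≤ t) (Ω : Walk n m) :
    (fold t Ω).kk i = Ω.kk i :=
  if_pos (show (i : ℕ) ≤ t from hi)

theorem fold_Finf (t : Fin m) (Ω : Walk n m) :
    (fold t Ω).Finf = affRefl (Ω.beta t) (Ω.kk t) Ω.Finf :=
  rfl

theorem foldr_fold_wall_of_le {i : Fin m} {L : List (Fin m)} (hL : ∀ t ∈ L, i ≤ t)
    (Ω : Walk n m) :
    (L.foldr fold Ω).beta i = Ω.beta i ∧ (L.foldr fold Ω).kk i = Ω.kk i := by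
  induction L with
  | nil => exact ⟨rfl, rfl⟩
  | cons t L ih =>
    obtain ⟨hbeta, hkk⟩ := ih fun s hs => hL s (List.mem_cons_of_mem _ hs)
    have hit : i ≤ t := hL t List.mem_cons_self
    exact ⟨(fold_beta_of_le hit _).trans hbeta, (fold_kk_of_le hit _).trans hkk⟩

theorem foldr_fold_Finf_of_semiconj {L : List (Fin m)} (hL : L.Pairwise (· ≤ ·))
    (Ω : Walk n m) (w : V n → V n) (r : Fin m → V n → V n)
    (hwall : ∀ i ∈ L, Function.Semiconj w (r i) (affRefl (Ω.beta i) (Ω.kk i)))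
    {x : V n} (hx : Ω.Finf = w x) :
    (L.foldr fold Ω).Finf = w (L.foldr r x) := by
  induction L with
  | nil => exact hx
  | cons t L ih =>
    obtain ⟨htL, hL⟩ := List.pairwise_cons.mp hL
    obtain ⟨hbeta, hkk⟩ := foldr_fold_wall_of_le htL Ω
    rw [List.foldr_cons, List.foldr_cons, fold_Finf, hbeta, hkk,
      ih hL fun i hi => hwall i (List.mem_cons_of_mem _ hi)]
    exact (hwall t List.mem_cons_self _).symm

end Walk

theorem weight_of_folded_walk_general {n m : ℕ} (lamv : V n)
    (beta : Fin m → V n) (kk : Fin m → ℤ)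
    (w winv : Function.End (V n))
    (hinv : w * winv = 1 ∧ winv * w = 1)
    (Ω₀ : Walk n m)
    (hrefl : ∀ i : Fin m,
      affRefl (Ω₀.beta i) (Ω₀.kk i) = w ∘ affRefl (beta i) ((kk i : ℝ)) ∘ winv)
    (hFinf : Ω₀.Finf = w lamv)
    (J : Finset (Fin m)) :
    ((J.sort (· ≤ ·)).foldr fold Ω₀).Finf
      = w ((J.sort (· ≤ ·)).foldr (fun i x => affRefl (beta i) ((kk i : ℝ)) x) lamv) := by
  have hwall : ∀ i, Function.Semiconj w (affRefl (beta i) (kk i))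
      (affRefl (Ω₀.beta i) (Ω₀.kk i)) := fun i x => by
    have hcancel : winv (w x) = x := congrFun hinv.2 x
    rw [hrefl i]
    exact congrArg (w ∘ affRefl (beta i) (kk i)) hcancel.symm
  exact Walk.foldr_fold_Finf_of_semiconj (J.pairwise_sort _) Ω₀ w _
    (fun i _ => hwall i) hFinf

theorem weight_of_folded_walk {n m : ℕ} (pos : Finset (V n)) (lamv : V n)
    (A : Fin (m + 1) → Set (V n)) (beta : Fin m → V n) (kk : Fin m → ℤ)
    (hpath : IsReducedPath pos A beta kk)
    (hstart : A 0 = fundAlcove pos)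
    (v : Function.End (V n)) (hv : IsMinCoset pos lamv v)
    (hend : A (Fin.last m) = v '' fundAlcove pos)
    (hl : ∀ i : Fin m, (kk i : ℤ) = Set.ncard {j : Fin m | j ≤ i ∧ beta j = beta i})
    (w winv : Function.End (V n)) (hw : w ∈ Wfin pos)
    (hinv : w * winv = 1 ∧ winv * w = 1)
    (Ω₀ : Walk n m)
    (hA : ∀ j, Ω₀.A j = w '' A j)
    (hrefl : ∀ i : Fin m,
      affRefl (Ω₀.beta i) (Ω₀.kk i) = w ∘ affRefl (beta i) ((kk i : ℝ)) ∘ winv)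
    (hFinf : Ω₀.Finf = w lamv)
    (J : Finset (Fin m)) :
    ((J.sort (· ≤ ·)).foldr fold Ω₀).Finf
      = w ((J.sort (· ≤ ·)).foldr (fun i x => affRefl (beta i) ((kk i : ℝ)) x) lamv) :=
  weight_of_folded_walk_general lamv beta kk w winv hinv Ω₀ hrefl hFinf J

end Stmt5
end

section
/- In type A_{n−1}, for a strict partition λ with n−1 parts and the fixed λ-chain Γ factored as Γ_{λ₁}...Γ₂, the filling map f sending a folding pair (w,T) to the filling σ of λ with σ(i,j) = π_j(i), where π_j = w T_{λ₁} T_{λ₁−1}···T_{j+1}, surjects onto the set T(λ,n) of non-attacking fillings of λ with entries in {1,...,n}. -/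
/-!
Statement 7: In type A_{n-1}, for a strict partition λ with n-1 parts and the fixed
λ-chain Γ, the filling map f, sending a folding pair (w,T) to the filling σ of λ with
σ(i,j) = π_j(i) where π_j = w T_{λ₁} ⋯ T_{j+1}, surjects onto the set T(λ,n) of
non-attacking fillings of λ with entries in {1,…,n}.
-/

namespace Stmt7



def cells (n : ℕ) (lam : ℕ → ℕ) : Finset (ℕ × ℕ) :=
  (Finset.Icc 1 (n - 1)).biUnion fun i => {i} ×ˢ Finset.Icc 1 (lam i)

def conj (n : ℕ) (lam : ℕ → ℕ) (j : ℕ) : ℕ :=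
  ((Finset.Icc 1 (n - 1)).filter fun i => j ≤ lam i).card

/-- the row ((a,n),(a,n-1),…,(a,k+1)) of the segment Γ(k) -/
def rowG (n a k : ℕ) : List (ℕ × ℕ) :=
  ((List.Ico (k + 1) (n + 1)).reverse).map fun b => (a, b)

/-- the same row with the last root (a,k+1) removed -/
def rowG' (n a k : ℕ) : List (ℕ × ℕ) :=
  ((List.Ico (k + 2) (n + 1)).reverse).map fun b => (a, b)

/-- the segment Γ(k): rows a = k, k-1, …, 1 -/
def GammaSeg (n k : ℕ) : List (ℕ × ℕ) :=
  ((List.range k).reverse).flatMap fun a0 => rowG n (a0 + 1) k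

/-- the segment Γ'(k) -/
def GammaSeg' (n k : ℕ) : List (ℕ × ℕ) :=
  ((List.range k).reverse).flatMap fun a0 => rowG' n (a0 + 1) k

open Classical in
/-- the factor Γ_j of the λ-chain: Γ'(λ'_j) if j is minimal with its conjugate value,
Γ(λ'_j) otherwise -/
noncomputable def GammaFactor (n : ℕ) (lam : ℕ → ℕ) (j : ℕ) : List (ℕ × ℕ) :=
  if (∀ i, 1 ≤ i → conj n lam i = conj n lam j → j ≤ i) then
    GammaSeg' n (conj n lam j) else GammaSeg n (conj n lam j)

/-- the concatenation Γ_{λ₁} Γ_{λ₁ - 1} ⋯ Γ_j -/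
noncomputable def GammaDown (n : ℕ) (lam : ℕ → ℕ) (j : ℕ) : List (ℕ × ℕ) :=
  ((List.range (lam 1 + 1 - j)).reverse).flatMap fun j0 => GammaFactor n lam (j0 + j)

/-- the fixed λ-chain Γ = Γ_{λ₁} ⋯ Γ₂ -/
noncomputable def GammaChain (n : ℕ) (lam : ℕ → ℕ) : List (ℕ × ℕ) :=
  GammaDown n lam 2

/-- the product of the transpositions at the selected (global) positions of a prefix of Γ,
taken in order -/
noncomputable def prodSel (L : List (ℕ × ℕ)) (J : Finset ℕ) : Equiv.Perm ℕ :=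
  ((((List.range L.length).zip L).filter fun q => q.1 ∈ J).map fun q => Equiv.swap q.2.1 q.2.2).prod

/-- π_j = w T_{λ₁} ⋯ T_{j+1} -/
noncomputable def piPerm (n : ℕ) (lam : ℕ → ℕ) (w : Equiv.Perm ℕ) (J : Finset ℕ)
    (j : ℕ) : Equiv.Perm ℕ :=
  w * prodSel (GammaDown n lam (j + 1)) J

/-- the filling map: f(w,T)(i,j) = π_j(i) -/
noncomputable def fillingMap (n : ℕ) (lam : ℕ → ℕ) (w : Equiv.Perm ℕ) (J : Finset ℕ) :
    ℕ × ℕ → ℕ :=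
  fun c => piPerm n lam w J c.2 c.1

/-- w is a permutation of {1,…,n} (an element of S_n) -/
def IsSnPerm (n : ℕ) (w : Equiv.Perm ℕ) : Prop :=
  ∀ i : ℕ, (i ∈ Finset.Icc 1 n → w i ∈ Finset.Icc 1 n) ∧ (i ∉ Finset.Icc 1 n → w i = i)

def Attack (c d : ℕ × ℕ) : Prop :=
  c ≠ d ∧ (c.2 = d.2 ∨ (c.2 = d.2 + 1 ∧ c.1 < d.1) ∨ (d.2 = c.2 + 1 ∧ d.1 < c.1))

/-- σ is a non-attacking filling of λ with entries in {1,…,n} -/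
def IsNonAttacking (n : ℕ) (lam : ℕ → ℕ) (σ : ℕ × ℕ → ℕ) : Prop :=
  (∀ c ∈ cells n lam, σ c ∈ Finset.Icc 1 n) ∧
  (∀ c ∈ cells n lam, ∀ d ∈ cells n lam, Attack c d → σ c ≠ σ d)


/-!
The folding pair is built column by column from the left. Column 1 extends to some
`π₁ ∈ S_n`. If `π_j` agrees with column `j`, put `p a = π_j⁻¹ σ(a, j+1)` for the rows
`a ≤ λ'_{j+1}`. Non-attacking makes `p` injective and forces `p a ≤ a` or `p a > λ'_j`
(otherwise `(a, j+1)` attacks `(p a, j)`), while strictness of `λ` makes `Γ_{j+1}` the block of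
roots `(a, b)` with `a ≤ λ'_{j+1}` and `λ'_j < b ≤ n`, listed row by row from `a = λ'_{j+1}`
down to `1`. One root per row yields a subsequence whose product `Q` satisfies `Q (p a) = a`:
if `C` does so for the rows below `a` and `p a ≠ a`, then `x = C (p a)` is neither a lower row
(injectivity) nor `a` (fixed by `C`), hence `x > λ'_j`, and `swap a x * C` also handles row `a`.
Then `π_{j+1} = π_j Q⁻¹` agrees with column `j+1`, and `w = π_{λ₁}`.
-/

open Equiv MulAction

section SwapProducts

variable {α : Type*} [DecidableEq α]

def prodMask (s : ℕ → Bool) : List (α × α) → Perm α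
  | [] => 1
  | r :: L => (if s 0 then swap r.1 r.2 else 1) * prodMask (fun i => s (i + 1)) L

def swapProd (T : List (α × α)) : Perm α :=
  (T.map fun r => swap r.1 r.2).prod

theorem swapProd_cons (r : α × α) (T : List (α × α)) :
    swapProd (r :: T) = swap r.1 r.2 * swapProd T := rfl

@[simp]
theorem prodMask_nil (s : ℕ → Bool) : prodMask s ([] : List (α × α)) = 1 := rfl

theorem prodMask_congr {s t : ℕ → Bool} {L : List (α × α)}
    (h : ∀ i < L.length, s i = t i) : prodMask s L = prodMask t L := by
  induction L generalizing s t with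
  | nil => rfl
  | cons r L ih =>
    simp only [prodMask, h 0 (by simp), ih fun i hi => h (i + 1) (by simpa using hi)]

theorem prodMask_append (s : ℕ → Bool) (L₁ L₂ : List (α × α)) :
    prodMask s (L₁ ++ L₂) = prodMask s L₁ * prodMask (fun i => s (i + L₁.length)) L₂ := by
  induction L₁ generalizing s with
  | nil => simp
  | cons r L ih =>
    simp only [List.cons_append, prodMask, ih, mul_assoc, List.length_cons, Nat.add_assoc]

theorem prodMask_append_of_length (s₁ s₂ : ℕ → Bool) (L₁ L₂ : List (α × α)) :
    prodMask (fun i => if i < L₁.length then s₁ i else s₂ (i - L₁.length)) (L₁ ++ L₂) =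
      prodMask s₁ L₁ * prodMask s₂ L₂ := by
  rw [prodMask_append]
  congr 1
  · exact prodMask_congr fun i hi => if_pos hi
  · exact prodMask_congr fun i _ => by simp

theorem exists_prodMask_eq_swapProd {T L : List (α × α)} (h : T.Sublist L) :
    ∃ s, prodMask s L = swapProd T := by
  induction h with
  | slnil => exact ⟨fun _ => false, rfl⟩
  | cons r _ ih =>
    obtain ⟨s, hs⟩ := ih
    exact ⟨fun i => if i = 0 then false else s (i - 1), by simpa [prodMask] using hs⟩
  | cons_cons r _ ih =>
    obtain ⟨s, hs⟩ := ih
    exact ⟨fun i => if i = 0 then true else s (i - 1), by simpa [prodMask, swapProd] using hs⟩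

theorem swap_mem_fixingSubgroup_compl {S : Set α} {a b : α} (ha : a ∈ S) (hb : b ∈ S) :
    swap a b ∈ fixingSubgroup (Perm α) Sᶜ :=
  (mem_fixingSubgroup_iff _).2 fun _ hy =>
    swap_apply_of_ne_of_ne (fun h => hy (h ▸ ha)) (fun h => hy (h ▸ hb))

theorem swapProd_mem_fixingSubgroup_compl {S : Set α} {T : List (α × α)}
    (hT : ∀ r ∈ T, r.1 ∈ S ∧ r.2 ∈ S) : swapProd T ∈ fixingSubgroup (Perm α) Sᶜ :=
  Subgroup.list_prod_mem _ <| List.forall_mem_map.2 fun r hr =>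
    swap_mem_fixingSubgroup_compl (hT r hr).1 (hT r hr).2

end SwapProducts

theorem apply_mem_of_mem_fixingSubgroup_compl {α : Type*} {S : Set α} {g : Perm α}
    (hg : g ∈ fixingSubgroup (Perm α) Sᶜ) {x : α} (hx : x ∈ S) : g x ∈ S := by
  by_contra h
  have hfix : g (g x) = g x := (mem_fixingSubgroup_iff _).1 hg _ h
  exact h (by rwa [g.injective hfix])

theorem prodSel_eq_prodMask (L : List (ℕ × ℕ)) (J : Finset ℕ) :
    prodSel L J = prodMask (fun i => decide (i ∈ J)) L := by
  suffices ∀ a, ((((List.range' a L.length).zip L).filter fun q => q.1 ∈ J).map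
      fun q => swap q.2.1 q.2.2).prod = prodMask (fun i => decide (a + i ∈ J)) L by
    simpa [prodSel, List.range_eq_range'] using this 0
  induction L with
  | nil => simp
  | cons r L ih =>
    intro a
    rw [List.length_cons, List.range'_succ, List.zip_cons_cons, List.filter_cons, prodMask]
    simp only [Nat.add_zero, ← Nat.add_assoc]
    split_ifs with ha <;> simp_all [ih (a + 1), Nat.add_right_comm]

theorem isSnPerm_iff {n : ℕ} {w : Perm ℕ} :
    IsSnPerm n w ↔ w ∈ fixingSubgroup (Perm ℕ) (Set.Icc 1 n)ᶜ := by
  rw [mem_fixingSubgroup_iff]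
  refine ⟨fun h i hi => (h i).2 (by simpa using hi),
    fun h i => ⟨fun hi => ?_, fun hi => h i (by simpa using hi)⟩⟩
  simpa using apply_mem_of_mem_fixingSubgroup_compl ((mem_fixingSubgroup_iff _).2 h)
    (x := i) (by simpa using hi)

/-- Rows `a = k, …, 1`, each listing `(a, n), …, (a, m)`: `GammaSeg n k = rootBlock k (k + 1) n`
and `GammaSeg' n k = rootBlock k (k + 2) n`. -/
def rootBlock (k m n : ℕ) : List (ℕ × ℕ) :=
  ((List.range k).reverse).flatMap fun a₀ =>
    ((List.Ico m (n + 1)).reverse).map fun b => (a₀ + 1, b)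

theorem mem_rootBlock {k m n : ℕ} {r : ℕ × ℕ} :
    r ∈ rootBlock k m n ↔ (1 ≤ r.1 ∧ r.1 ≤ k) ∧ (m ≤ r.2 ∧ r.2 ≤ n) := by
  obtain ⟨a, b⟩ := r
  simp only [rootBlock, List.mem_flatMap, List.mem_reverse, List.mem_range, List.mem_map,
    List.Ico.mem, Prod.mk.injEq]
  constructor
  · rintro ⟨a₀, ha₀, b, hb, rfl, rfl⟩
    omega
  · rintro ⟨ha, hb⟩
    exact ⟨a - 1, by omega, b, by omega, by omega, rfl⟩

theorem rootBlock_succ (k m n : ℕ) :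
    rootBlock (k + 1) m n =
      ((List.Ico m (n + 1)).reverse).map (fun b => (k + 1, b)) ++ rootBlock k m n := by
  simp [rootBlock, List.range_succ]

theorem exists_sublist_rootBlock {p : ℕ → ℕ} {k m n : ℕ} (hkm : k < m)
    (hp : ∀ a ∈ Set.Icc 1 k, p a ∈ Set.Icc 1 n ∧ (p a ≤ a ∨ m ≤ p a))
    (hinj : Set.InjOn p (Set.Icc 1 k)) :
    ∃ T, T.Sublist (rootBlock k m n) ∧ ∀ a ∈ Set.Icc 1 k, swapProd T (p a) = a := by
  induction k with
  | zero => exact ⟨[], List.nil_sublist _, fun a ha => by simp at ha⟩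
  | succ k ih =>
    have hIcc : Set.Icc 1 k ⊆ Set.Icc 1 (k + 1) := Set.Icc_subset_Icc_right (by omega)
    obtain ⟨T, hT, hTp⟩ := ih (by omega) (fun a ha => hp a (hIcc ha)) (hinj.mono hIcc)
    set C := swapProd T
    have hC : C ∈ fixingSubgroup (Perm ℕ) (Set.Icc 1 k ∪ Set.Icc m n)ᶜ :=
      swapProd_mem_fixingSubgroup_compl fun r hr => by
        have := mem_rootBlock.1 (hT.subset hr)
        exact ⟨Or.inl this.1, Or.inr this.2⟩
    have hlast : k + 1 ∈ Set.Icc 1 (k + 1) := ⟨by omega, le_rfl⟩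
    obtain ⟨⟨hp1, hpn⟩, hpk⟩ := hp (k + 1) hlast
    by_cases hfix : p (k + 1) = k + 1
    · refine ⟨T, hT.trans (rootBlock_succ k m n ▸ List.sublist_append_right _ _),
        fun a ha => ?_⟩
      rcases eq_or_lt_of_le ha.2 with rfl | hak
      · rw [hfix]
        exact (mem_fixingSubgroup_iff _).1 hC _ (by simp; omega)
      · exact hTp a ⟨ha.1, by omega⟩
    set x := C (p (k + 1))
    have hx : x ∈ Set.Icc m n := by
      have hxS : x ∈ Set.Icc 1 k ∪ Set.Icc m n :=
        apply_mem_of_mem_fixingSubgroup_compl hC (by simp; omega)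
      refine hxS.resolve_left fun hxk => ?_
      have hxe : x = k + 1 := hinj (hIcc hxk) hlast (C.injective (hTp x hxk))
      exact absurd hxk.2 (by omega)
    refine ⟨(k + 1, x) :: T, ?_, fun a ha => ?_⟩
    · rw [rootBlock_succ]
      exact (List.singleton_sublist.2 (List.mem_map.2 ⟨x, by simpa using hx, rfl⟩)).append hT
    · rw [swapProd_cons]
      rcases eq_or_lt_of_le ha.2 with rfl | hak
      · exact swap_apply_right _ _
      · rw [Perm.mul_apply, hTp a ⟨ha.1, by omega⟩]
        exact swap_apply_of_ne_of_ne (by omega) (by have := hx.1; omega)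

section Partition

variable {n : ℕ} {lam : ℕ → ℕ}

theorem mem_cells {i j : ℕ} :
    (i, j) ∈ cells n lam ↔ (1 ≤ i ∧ i ≤ n - 1) ∧ (1 ≤ j ∧ j ≤ lam i) := by
  simp [cells]

theorem conj_le (j : ℕ) : conj n lam j ≤ n - 1 := by
  simpa [conj] using Finset.card_filter_le (Finset.Icc 1 (n - 1)) fun i => j ≤ lam i

theorem conj_antitone : Antitone (conj n lam) := fun _ _ hjj =>
  Finset.card_le_card fun _ hi => by
    simp only [Finset.mem_filter] at hi ⊢
    exact ⟨hi.1, hjj.trans hi.2⟩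

theorem le_conj_iff (hlam : AntitoneOn lam (Set.Icc 1 (n - 1))) {i j : ℕ}
    (hi : i ∈ Set.Icc 1 (n - 1)) : i ≤ conj n lam j ↔ j ≤ lam i := by
  constructor
  · intro h
    by_contra! hlt
    have : conj n lam j ≤ i - 1 := by
      calc conj n lam j ≤ (Finset.Icc 1 (i - 1)).card := Finset.card_le_card fun i' hi' => by
            simp only [Finset.mem_filter, Finset.mem_Icc] at hi' ⊢
            refine ⟨hi'.1.1, ?_⟩
            by_contra! h'
            have := hlam hi ⟨hi'.1.1, hi'.1.2⟩ (by omega : i ≤ i')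
            omega
        _ = i - 1 := by simp
    have := hi.1
    omega
  · intro h
    calc i = (Finset.Icc 1 i).card := by simp
      _ ≤ conj n lam j := Finset.card_le_card fun i' hi' => by
          simp only [Finset.mem_filter, Finset.mem_Icc] at hi' ⊢
          have hi'n : i' ∈ Set.Icc 1 (n - 1) := ⟨hi'.1, hi'.2.trans hi.2⟩
          exact ⟨hi'n, h.trans (hlam hi'n hi hi'.2)⟩

theorem mem_cells_iff_le_conj (hlam : AntitoneOn lam (Set.Icc 1 (n - 1))) {i j : ℕ} :
    (i, j) ∈ cells n lam ↔ i ∈ Set.Icc 1 (conj n lam j) ∧ 1 ≤ j := by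
  rw [mem_cells]
  constructor
  · rintro ⟨hi, hj, hjl⟩
    exact ⟨⟨hi.1, (le_conj_iff hlam hi).2 hjl⟩, hj⟩
  · rintro ⟨hi, hj⟩
    have hi' : i ∈ Set.Icc 1 (n - 1) := ⟨hi.1, hi.2.trans (conj_le j)⟩
    exact ⟨hi', hj, (le_conj_iff hlam hi').1 hi.2⟩

theorem conj_le_conj_succ_add_one (hlam : StrictAntiOn lam (Set.Icc 1 (n - 1))) (j : ℕ) :
    conj n lam j ≤ conj n lam (j + 1) + 1 := by
  set k := conj n lam (j + 1)
  by_contra! h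
  have hk2 : k + 2 ∈ Set.Icc 1 (n - 1) :=
    ⟨by omega, by have := conj_le (n := n) (lam := lam) j; omega⟩
  have hk1 : k + 1 ∈ Set.Icc 1 (n - 1) := ⟨by omega, by have := hk2.2; omega⟩
  have h2 : j ≤ lam (k + 2) := (le_conj_iff hlam.antitoneOn hk2).1 (by omega)
  have h1 : ¬ j + 1 ≤ lam (k + 1) := fun h' => by
    have := (le_conj_iff hlam.antitoneOn hk1).2 h'
    omega
  have := hlam hk1 hk2 (by omega)
  omega

theorem gammaFactor_succ_eq_rootBlock (hlam : StrictAntiOn lam (Set.Icc 1 (n - 1))) {j : ℕ}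
    (hj : 1 ≤ j) :
    GammaFactor n lam (j + 1) = rootBlock (conj n lam (j + 1)) (conj n lam j + 1) n := by
  have hanti : conj n lam (j + 1) ≤ conj n lam j := conj_antitone (by omega)
  have hgap := conj_le_conj_succ_add_one hlam j
  unfold GammaFactor
  split_ifs with hmin
  · have : conj n lam j ≠ conj n lam (j + 1) := fun h => by have := hmin j hj h; omega
    rw [show conj n lam j + 1 = conj n lam (j + 1) + 2 by omega]
    rfl
  · push Not at hmin
    obtain ⟨i, hi, hieq, hij⟩ := hmin
    have : conj n lam j = conj n lam (j + 1) :=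
      le_antisymm (hieq ▸ conj_antitone (by omega : i ≤ j)) hanti
    rw [this]
    rfl

end Partition

/-- The segment `Γ_c Γ_{c-1} ⋯ Γ_j` of the λ-chain, so that
`GammaDown n lam j = GammaFromTo n lam (lam 1) j`. -/
noncomputable def GammaFromTo (n : ℕ) (lam : ℕ → ℕ) (c j : ℕ) : List (ℕ × ℕ) :=
  ((List.range (c + 1 - j)).reverse).flatMap fun j₀ => GammaFactor n lam (j₀ + j)

section Segments

variable {n : ℕ} {lam : ℕ → ℕ}

theorem gammaFromTo_of_lt {c j : ℕ} (h : c < j) : GammaFromTo n lam c j = [] := by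
  simp [GammaFromTo, Nat.sub_eq_zero_of_le h]

theorem gammaFromTo_succ {c j : ℕ} (h : j ≤ c + 1) :
    GammaFromTo n lam (c + 1) j = GammaFactor n lam (c + 1) ++ GammaFromTo n lam c j := by
  rw [GammaFromTo, GammaFromTo, show c + 1 + 1 - j = c + 1 - j + 1 by omega, List.range_succ]
  simp only [List.reverse_append, List.reverse_singleton, List.singleton_append, List.flatMap_cons]
  rw [show c + 1 - j + j = c + 1 by omega]

theorem gammaFromTo_prefix {c j j' : ℕ} (hjj : j ≤ j') :
    GammaFromTo n lam c j' <+: GammaFromTo n lam c j := by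
  induction c with
  | zero =>
    rcases Nat.eq_zero_or_pos j' with rfl | hj'
    · rw [Nat.le_zero.1 hjj]
    · rw [gammaFromTo_of_lt hj']
      exact List.nil_prefix
  | succ c ih =>
    by_cases hj' : c + 1 < j'
    · rw [gammaFromTo_of_lt hj']
      exact List.nil_prefix
    · rw [gammaFromTo_succ (by omega), gammaFromTo_succ (by omega)]
      exact (List.prefix_append_right_inj _).2 ih

end Segments

theorem exists_isSnPerm_eqOn {n : ℕ} {s : Set ℕ} {v : ℕ → ℕ} (hs : s ⊆ Set.Icc 1 n)
    (hv : Set.MapsTo v s (Set.Icc 1 n)) (hinj : Set.InjOn v s) :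
    ∃ w : Perm ℕ, IsSnPerm n w ∧ Set.EqOn w v s := by
  classical
  obtain ⟨g, hg⟩ := Set.MapsTo.exists_equiv_extend_of_card_eq (α := Finset.Icc 1 n)
    (t := Finset.Icc 1 n) (s := {x | x.1 ∈ s}) (f := fun x => v x.1) (by simp)
    (fun x hx => by simpa using hv hx) (fun x hx y hy h => Subtype.ext (hinj hx hy h))
  refine ⟨Perm.ofSubtype g,
    fun i => ⟨fun hi => ?_, fun hi => Perm.ofSubtype_apply_of_not_mem g hi⟩, fun i hi => ?_⟩
  · rw [Perm.ofSubtype_apply_of_mem g hi]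
    exact (g ⟨i, hi⟩).2
  · have hi' : i ∈ Finset.Icc 1 n := by simpa using hs hi
    rw [Perm.ofSubtype_apply_of_mem g hi']
    exact hg ⟨i, hi'⟩ hi

section Columns

variable {n : ℕ} {lam : ℕ → ℕ} {σ : ℕ × ℕ → ℕ}

theorem exists_isSnPerm_first_column (hσ : IsNonAttacking n lam σ) :
    ∃ u : Perm ℕ, IsSnPerm n u ∧ ∀ i, (i, 1) ∈ cells n lam → u i = σ (i, 1) := by
  obtain ⟨u, hu, hv⟩ := exists_isSnPerm_eqOn (n := n) (s := {i | (i, 1) ∈ cells n lam})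
    (v := fun i => σ (i, 1)) (fun i hi => by simp [mem_cells] at hi ⊢; omega)
    (fun i hi => by simpa using hσ.1 _ hi)
    (fun i hi i' hi' h => by
      by_contra hne
      exact hσ.2 _ hi _ hi' ⟨by simpa using hne, Or.inl rfl⟩ h)
  exact ⟨u, hu, fun i hi => hv hi⟩

theorem exists_sublist_gammaFactor (hlam : StrictAntiOn lam (Set.Icc 1 (n - 1)))
    (hσ : IsNonAttacking n lam σ) {j : ℕ} (hj : 1 ≤ j) {u : Perm ℕ} (hu : IsSnPerm n u)
    (hcol : ∀ i, (i, j) ∈ cells n lam → u i = σ (i, j)) :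
    ∃ T, T.Sublist (GammaFactor n lam (j + 1)) ∧ IsSnPerm n (u * (swapProd T)⁻¹) ∧
      ∀ i, (i, j + 1) ∈ cells n lam → (u * (swapProd T)⁻¹) i = σ (i, j + 1) := by
  have hcells : ∀ {i j}, (i, j) ∈ cells n lam ↔ i ∈ Set.Icc 1 (conj n lam j) ∧ 1 ≤ j :=
    mem_cells_iff_le_conj hlam.antitoneOn
  set k := conj n lam (j + 1)
  set p : ℕ → ℕ := fun a => u⁻¹ (σ (a, j + 1))
  have hup : ∀ a, u (p a) = σ (a, j + 1) := fun a => u.apply_symm_apply _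
  have hp : ∀ a ∈ Set.Icc 1 k,
      p a ∈ Set.Icc 1 n ∧ (p a ≤ a ∨ conj n lam j + 1 ≤ p a) := by
    intro a ha
    have hcell : (a, j + 1) ∈ cells n lam := hcells.2 ⟨ha, by omega⟩
    have hpn : p a ∈ Set.Icc 1 n := apply_mem_of_mem_fixingSubgroup_compl
      (inv_mem (isSnPerm_iff.1 hu)) (by simpa using hσ.1 _ hcell)
    refine ⟨hpn, ?_⟩
    by_contra! h
    have hcell' : (p a, j) ∈ cells n lam := hcells.2 ⟨⟨hpn.1, by omega⟩, hj⟩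
    refine hσ.2 _ hcell _ hcell' ⟨by simp, Or.inr (Or.inl ⟨rfl, h.1⟩)⟩ ?_
    rw [← hup, hcol _ hcell']
  have hinj : Set.InjOn p (Set.Icc 1 k) := fun a ha b hb h => by
    by_contra hne
    exact hσ.2 _ (hcells.2 ⟨ha, by omega⟩) _ (hcells.2 ⟨hb, by omega⟩)
      ⟨by simpa using hne, Or.inl rfl⟩ (by rw [← hup, ← hup, h])
  obtain ⟨T, hT, hTp⟩ := exists_sublist_rootBlock
    (Nat.lt_succ_of_le (conj_antitone (by omega : j ≤ j + 1))) hp hinj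
  have hTn : swapProd T ∈ fixingSubgroup (Perm ℕ) (Set.Icc 1 n)ᶜ := by
    refine swapProd_mem_fixingSubgroup_compl fun r hr => ?_
    have hr' := mem_rootBlock.1 (hT.subset hr)
    have := conj_le (n := n) (lam := lam) (j + 1)
    exact ⟨⟨hr'.1.1, by omega⟩, ⟨by omega, hr'.2.2⟩⟩
  refine ⟨T, gammaFactor_succ_eq_rootBlock hlam hj ▸ hT, isSnPerm_iff.2 (mul_mem (isSnPerm_iff.1 hu) (inv_mem hTn)), fun i hi => ?_⟩
  have hik : i ∈ Set.Icc 1 k := (hcells.1 hi).1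
  rw [Perm.mul_apply, Perm.inv_eq_iff_eq.2 (hTp i hik).symm, hup]

end Columns

theorem exists_folding_upTo {n : ℕ} {lam : ℕ → ℕ} {σ : ℕ × ℕ → ℕ}
    (hlam : StrictAntiOn lam (Set.Icc 1 (n - 1))) (hσ : IsNonAttacking n lam σ) (c : ℕ) :
    ∃ u : Perm ℕ, IsSnPerm n u ∧ ∃ s : ℕ → Bool,
      ∀ i j, (i, j) ∈ cells n lam → j ≤ c →
        (u * prodMask s (GammaFromTo n lam c (j + 1))) i = σ (i, j) := by
  induction c with
  | zero => exact ⟨1, isSnPerm_iff.2 (one_mem _), fun _ => false, fun i j hij hj => by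
      simp [mem_cells] at hij; omega⟩
  | succ c ih =>
    obtain rfl | hc := Nat.eq_zero_or_pos c
    · obtain ⟨u, hu, hcol⟩ := exists_isSnPerm_first_column hσ
      refine ⟨u, hu, fun _ => false, fun i j hij hj => ?_⟩
      obtain rfl : j = 1 := by simp [mem_cells] at hij; omega
      simpa [gammaFromTo_of_lt] using hcol i hij
    obtain ⟨u, hu, s, hus⟩ := ih
    have hcol : ∀ i, (i, c) ∈ cells n lam → u i = σ (i, c) := fun i hi => by
      simpa [gammaFromTo_of_lt] using hus i c hi le_rfl
    obtain ⟨T, hT, hu', hcol'⟩ := exists_sublist_gammaFactor hlam hσ hc hu hcol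
    obtain ⟨t, ht⟩ := exists_prodMask_eq_swapProd hT
    refine ⟨u * (swapProd T)⁻¹, hu',
      fun i => if i < (GammaFactor n lam (c + 1)).length then t i
        else s (i - (GammaFactor n lam (c + 1)).length), fun i j hij hj => ?_⟩
    rcases Nat.lt_or_eq_of_le hj with hj | rfl
    · rw [gammaFromTo_succ (by omega), prodMask_append_of_length, ht, mul_assoc,
        inv_mul_cancel_left]
      exact hus i j hij (by omega)
    · simpa [gammaFromTo_of_lt] using hcol' i hij

theorem filling_map_surjective_general (n : ℕ) (lam : ℕ → ℕ)
    (hstrict : ∀ i, 1 ≤ i → i < n - 1 → lam (i + 1) < lam i)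
    (σ : ℕ × ℕ → ℕ) (hσ : IsNonAttacking n lam σ) :
    ∃ (w : Equiv.Perm ℕ) (J : Finset ℕ), IsSnPerm n w ∧
      J ⊆ Finset.range (GammaChain n lam).length ∧
      ∀ c ∈ cells n lam, fillingMap n lam w J c = σ c := by
  have hlam : StrictAntiOn lam (Set.Icc 1 (n - 1)) :=
    strictAntiOn_of_succ_lt Set.ordConnected_Icc fun a _ ha hsa => by
      simp only [Order.succ_eq_add_one, Set.mem_Icc] at ha hsa
      exact hstrict a ha.1 (by omega)
  obtain ⟨w, hw, s, hws⟩ := exists_folding_upTo hlam hσ (lam 1)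
  set J := (Finset.range (GammaChain n lam).length).filter fun i => s i
  refine ⟨w, J, hw, Finset.filter_subset _ _, fun ⟨i, j⟩ hij => ?_⟩
  obtain ⟨hi, hj, hjl⟩ := mem_cells.1 hij
  have hj1 : j ≤ lam 1 := hjl.trans (hlam.antitoneOn ⟨le_rfl, hi.1.trans hi.2⟩ hi hi.1)
  have hprefix : GammaDown n lam (j + 1) <+: GammaChain n lam := gammaFromTo_prefix (by omega)
  change (w * prodSel (GammaDown n lam (j + 1)) J) i = σ (i, j)
  rw [prodSel_eq_prodMask, prodMask_congr (t := s) fun x hx => by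
    simp [J, hx.trans_le hprefix.length_le]]
  exact hws i j hij hj1

theorem filling_map_surjective (n : ℕ) (lam : ℕ → ℕ) (hn : 2 ≤ n)
    (hstrict : ∀ i, 1 ≤ i → i < n - 1 → lam (i + 1) < lam i)
    (hpos : 0 < lam (n - 1))
    (σ : ℕ × ℕ → ℕ) (hσ : IsNonAttacking n lam σ) :
    ∃ (w : Equiv.Perm ℕ) (J : Finset ℕ), IsSnPerm n w ∧
      J ⊆ Finset.range (GammaChain n lam).length ∧
      ∀ c ∈ cells n lam, fillingMap n lam w J c = σ c :=
  filling_map_surjective_general n lam hstrict σ hσ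

end Stmt7
end

section
/- In type A_{n−1}, for any folding pair (w,T) with filling σ = f(w,T), the content of σ equals w(μ(T)) as an element of the weight lattice ℤⁿ/ℤ(1,...,1); i.e. the multiset of entries of σ records the weight of the corresponding alcove walk. -/
/-!
Statement 8: In type A_{n-1}, for any folding pair (w,T) with filling σ = f(w,T), the
content of σ equals w(μ(T)) as an element of the weight lattice ℤⁿ/ℤ(1,…,1), where
μ(T) = r̂_{j₁} ⋯ r̂_{j_s}(λ) and r̂_i = s_{β_i, l_i} with l_i = #{j ≤ i : β_j = β_i}.
-/

namespace Stmt8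


def cells (n : ℕ) (lam : ℕ → ℕ) : Finset (ℕ × ℕ) :=
  (Finset.Icc 1 (n - 1)).biUnion fun i => {i} ×ˢ Finset.Icc 1 (lam i)

def conj (n : ℕ) (lam : ℕ → ℕ) (j : ℕ) : ℕ :=
  ((Finset.Icc 1 (n - 1)).filter fun i => j ≤ lam i).card

/-- the row ((a,n),(a,n-1),…,(a,k+1)) of the segment Γ(k) -/
def rowG (n a k : ℕ) : List (ℕ × ℕ) :=
  ((List.Ico (k + 1) (n + 1)).reverse).map fun b => (a, b)

/-- the same row with the last root (a,k+1) removed -/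
def rowG' (n a k : ℕ) : List (ℕ × ℕ) :=
  ((List.Ico (k + 2) (n + 1)).reverse).map fun b => (a, b)

/-- the segment Γ(k): rows a = k, k-1, …, 1 -/
def GammaSeg (n k : ℕ) : List (ℕ × ℕ) :=
  ((List.range k).reverse).flatMap fun a0 => rowG n (a0 + 1) k

/-- the segment Γ'(k) -/
def GammaSeg' (n k : ℕ) : List (ℕ × ℕ) :=
  ((List.range k).reverse).flatMap fun a0 => rowG' n (a0 + 1) k

open Classical in
/-- the factor Γ_j of the λ-chain: Γ'(λ'_j) if j is minimal with its conjugate value,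
Γ(λ'_j) otherwise -/
noncomputable def GammaFactor (n : ℕ) (lam : ℕ → ℕ) (j : ℕ) : List (ℕ × ℕ) :=
  if (∀ i, 1 ≤ i → conj n lam i = conj n lam j → j ≤ i) then
    GammaSeg' n (conj n lam j) else GammaSeg n (conj n lam j)

/-- the concatenation Γ_{λ₁} Γ_{λ₁ - 1} ⋯ Γ_j -/
noncomputable def GammaDown (n : ℕ) (lam : ℕ → ℕ) (j : ℕ) : List (ℕ × ℕ) :=
  ((List.range (lam 1 + 1 - j)).reverse).flatMap fun j0 => GammaFactor n lam (j0 + j)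

/-- the fixed λ-chain Γ = Γ_{λ₁} ⋯ Γ₂ -/
noncomputable def GammaChain (n : ℕ) (lam : ℕ → ℕ) : List (ℕ × ℕ) :=
  GammaDown n lam 2

/-- the product of the transpositions at the selected (global) positions of a prefix of Γ,
taken in order -/
noncomputable def prodSel (L : List (ℕ × ℕ)) (J : Finset ℕ) : Equiv.Perm ℕ :=
  (((L.zipIdx.map Prod.swap).filter fun q => q.1 ∈ J).map fun q => Equiv.swap q.2.1 q.2.2).prod

/-- π_j = w T_{λ₁} ⋯ T_{j+1} -/
noncomputable def piPerm (n : ℕ) (lam : ℕ → ℕ) (w : Equiv.Perm ℕ) (J : Finset ℕ)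
    (j : ℕ) : Equiv.Perm ℕ :=
  w * prodSel (GammaDown n lam (j + 1)) J

/-- the filling map: f(w,T)(i,j) = π_j(i) -/
noncomputable def fillingMap (n : ℕ) (lam : ℕ → ℕ) (w : Equiv.Perm ℕ) (J : Finset ℕ) :
    ℕ × ℕ → ℕ :=
  fun c => piPerm n lam w J c.2 c.1

/-- w is a permutation of {1,…,n} (an element of S_n) -/
def IsSnPerm (n : ℕ) (w : Equiv.Perm ℕ) : Prop :=
  ∀ i : ℕ, (i ∈ Finset.Icc 1 n → w i ∈ Finset.Icc 1 n) ∧ (i ∉ Finset.Icc 1 n → w i = i)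

/-- the affine reflection r̂ attached to position idx of the λ-chain Γ, acting on the
weight space ℤⁿ (vectors as functions ℕ → ℤ, coordinates 1,…,n):
s_{(a,b),l}(v) = v - (v_a - v_b - l)(e_a - e_b), where (a,b) = β_idx and
l = #{j ≤ idx : β_j = β_idx}. -/
noncomputable def rhat (n : ℕ) (lam : ℕ → ℕ) (idx : ℕ) (v : ℕ → ℤ) : ℕ → ℤ :=
  let p := (GammaChain n lam).getD idx (0, 0)
  let l : ℤ := ((GammaChain n lam).take (idx + 1)).count p
  fun t => v t - (v p.1 - v p.2 - l) *
    ((if t = p.1 then 1 else 0) - (if t = p.2 then 1 else 0))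

/-- λ as a weight vector (λ₁,…,λ_{n-1},0) -/
def lamVec (n : ℕ) (lam : ℕ → ℕ) : ℕ → ℤ :=
  fun i => if 1 ≤ i ∧ i ≤ n - 1 then (lam i : ℤ) else 0

/-- μ(T) = r̂_{j₁} ⋯ r̂_{j_s}(λ), for J = {j₁ < … < j_s} -/
noncomputable def muWeight (n : ℕ) (lam : ℕ → ℕ) (J : Finset ℕ) : ℕ → ℤ :=
  (J.sort (· ≤ ·)).foldr (fun idx v => rhat n lam idx v) (lamVec n lam)

/-- content(σ)_v = number of entries of σ equal to v -/
noncomputable def content (n : ℕ) (lam : ℕ → ℕ) (σ : ℕ × ℕ → ℕ) : ℕ → ℤ :=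
  fun v => (((cells n lam).filter fun c => σ c = v).card : ℤ)

/-!
Both sides are read off column by column. Column `j` of `f(w,T)` holds `π_j(1), …, π_j(λ'_j)`,
so the content at `i` counts the columns `j` with `π_j⁻¹(i) ≤ λ'_j`; for `T = ∅` this count at
`u = w⁻¹(i)` is `λ_u`, the weight `λ` itself.

Removing the first folding position `p`, with root `β_p = (a, b)` lying in the factor `Γ_k`,
changes `μ(T)` by `r̂_p`, which is the transposition `(a b)` followed by adding
`l_p (e_a - e_b)`. On the filling side, `π_j` gets composed with the same transposition in
every column `j < k`, while the columns `j ≥ k` are untouched and produce the correction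
`(e_a - e_b)` times `#{j ≥ k : a ≤ λ'_j < b}`. This count is `l_p`, because `(a, b)` occurs exactly
once in each such `Γ_j` (the root omitted from a primed factor is never `(a, b)`). Hence
the content equals `w(μ(T))` on the nose.
-/

lemma List.getD_mem_and_count_take_of_append_prefix {α : Type*} [BEq α] [LawfulBEq α]
    {A B L : List α} {p : ℕ} {d : α} (hpre : A ++ B <+: L) (hB : B.Nodup)
    (h1 : A.length ≤ p) (h2 : p < A.length + B.length) :
    L.getD p d ∈ B ∧ (L.take (p + 1)).count (L.getD p d) = A.count (L.getD p d) + 1 := by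
  obtain ⟨C, rfl⟩ := hpre
  obtain ⟨B₁, y, B₂, rfl, hB₁⟩ : ∃ B₁ y B₂, B = B₁ ++ y :: B₂ ∧ B₁.length = p - A.length :=
    ⟨B.take (p - A.length), B[p - A.length], B.drop (p - A.length + 1), by simp, by simp; omega⟩
  have hy : y ∉ B₁ := fun hy => (List.nodup_middle.1 hB |> List.nodup_cons.1).1 (by simp [hy])
  have hL : A ++ (B₁ ++ y :: B₂) ++ C = (A ++ B₁) ++ y :: (B₂ ++ C) := by simp
  have hp : (A ++ B₁).length = p := by simp; omega
  rw [hL, List.getD_eq_getElem _ _ (by simp; omega), List.getElem_append_right (by omega)]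
  simp only [hp, Nat.sub_self, List.getElem_cons_zero]
  refine ⟨by simp, ?_⟩
  rw [List.take_append, hp, List.take_of_length_le (by omega), Nat.add_sub_cancel_left,
    List.take_succ_cons, List.take_zero]
  simp [List.count_eq_zero_of_not_mem hy]

lemma sub_reflection_eq_swap_add (v : ℕ → ℤ) (a b u : ℕ) (l : ℤ) :
    v u - (v a - v b - l) * ((if u = a then 1 else 0) - (if u = b then 1 else 0))
      = v (Equiv.swap a b u) + l * ((if u = a then 1 else 0) - (if u = b then 1 else 0)) := by
  rw [Equiv.swap_apply_def]
  split_ifs <;> subst_vars <;> simp_all <;> ring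

lemma ite_mem_Icc_eq_swap_add {a b c u : ℕ} (ha : 1 ≤ a) (hab : a < b) :
    (if u ∈ Finset.Icc 1 c then 1 else 0 : ℤ)
      = (if Equiv.swap a b u ∈ Finset.Icc 1 c then 1 else 0)
        + ((if u = a then 1 else 0) - (if u = b then 1 else 0))
          * (if a ≤ c ∧ c < b then 1 else 0) := by
  rw [Equiv.swap_apply_def]
  split_ifs <;> simp_all <;> omega

section ProdSel

variable {L : List (ℕ × ℕ)} {J : Finset ℕ} {p : ℕ}

lemma prodSel_eq_one_of_length_le (h : ∀ t ∈ J, L.length ≤ t) : prodSel L J = 1 := by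
  rw [prodSel, List.filter_eq_nil_iff.2, List.map_nil, List.prod_nil]
  intro q hq
  obtain ⟨⟨y, k⟩, hyk, rfl⟩ := List.mem_map.1 hq
  have := (List.mem_zipIdx hyk).2.1
  simpa using fun hk => (h k hk).not_gt (by simpa using this)

lemma prodSel_eq_swap_mul_erase (hp : p ∈ J) (hmin : ∀ t ∈ J, p ≤ t) (hlen : p < L.length) :
    prodSel L J = Equiv.swap (L.getD p (0, 0)).1 (L.getD p (0, 0)).2 * prodSel L (J.erase p) := by
  obtain ⟨A, x, B, rfl, hA⟩ : ∃ A x B, L = A ++ x :: B ∧ A.length = p :=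
    ⟨L.take p, L[p], L.drop (p + 1), by simp, by simp; omega⟩
  have hlow : ∀ K : Finset ℕ, K ⊆ J → ((A.zipIdx.map Prod.swap).filter fun q => q.1 ∈ K) = [] := by
    intro K hK
    refine List.filter_eq_nil_iff.2 fun q hq => ?_
    obtain ⟨⟨y, k⟩, hyk, rfl⟩ := List.mem_map.1 hq
    have := (List.mem_zipIdx hyk).2.1
    simpa using fun hk => (hmin k (hK hk)).not_gt (by simpa [hA] using this)
  have hhigh : ((B.zipIdx (p + 1)).map Prod.swap).filter (fun q => q.1 ∈ J.erase p)
      = ((B.zipIdx (p + 1)).map Prod.swap).filter (fun q => q.1 ∈ J) := by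
    refine List.filter_congr fun q hq => ?_
    obtain ⟨⟨y, k⟩, hyk, rfl⟩ := List.mem_map.1 hq
    have := (List.mem_zipIdx hyk).1
    simp only [Prod.swap, Finset.mem_erase]
    grind
  rw [prodSel, prodSel, List.zipIdx_append, List.zipIdx_cons, List.map_append, List.map_cons,
    List.filter_append, List.filter_append, List.filter_cons, List.filter_cons, hlow J le_rfl,
    hlow _ (Finset.erase_subset p J), zero_add, hA, hhigh]
  subst hA
  simp [hp]

end ProdSel

section Conjugate

variable {n : ℕ} {lam : ℕ → ℕ}

lemma conj_le (j : ℕ) : conj n lam j ≤ n - 1 :=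
  (Finset.card_filter_le _ _).trans (by simp)

lemma conj_anti {j j' : ℕ} (h : j ≤ j') : conj n lam j' ≤ conj n lam j :=
  Finset.card_le_card (Finset.monotone_filter_right _ fun _ _ hi => h.trans hi)

variable (hanti : ∀ i, 1 ≤ i → i < n - 1 → lam (i + 1) ≤ lam i)
include hanti

lemma lam_anti {a b : ℕ} (ha : 1 ≤ a) (hab : a ≤ b) (hb : b ≤ n - 1) : lam b ≤ lam a := by
  induction b, hab using Nat.le_induction with
  | base => rfl
  | succ b hab ih => exact (hanti b (ha.trans hab) (by omega)).trans (ih (by omega))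

lemma le_conj_iff {a j : ℕ} (ha : 1 ≤ a) (ha' : a ≤ n - 1) : a ≤ conj n lam j ↔ j ≤ lam a := by
  constructor
  · intro h
    by_contra! hlt
    have hsub : (Finset.Icc 1 (n - 1)).filter (fun i => j ≤ lam i) ⊆ Finset.Icc 1 (a - 1) := by
      intro i hi
      simp only [Finset.mem_filter, Finset.mem_Icc] at hi ⊢
      refine ⟨hi.1.1, ?_⟩
      by_contra! hia
      linarith [lam_anti hanti ha (show a ≤ i by omega) hi.1.2]
    have := Finset.card_le_card hsub
    simp only [Nat.card_Icc] at this
    unfold conj at h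
    omega
  · intro h
    have hsub : Finset.Icc 1 a ⊆ (Finset.Icc 1 (n - 1)).filter (fun i => j ≤ lam i) := by
      intro i hi
      simp only [Finset.mem_filter, Finset.mem_Icc] at hi ⊢
      exact ⟨⟨hi.1, by omega⟩, h.trans (lam_anti hanti hi.1 hi.2 ha')⟩
    simpa [conj] using Finset.card_le_card hsub

lemma mem_cells_iff {c : ℕ × ℕ} :
    c ∈ cells n lam ↔ c.2 ∈ Finset.Icc 1 (lam 1) ∧ c.1 ∈ Finset.Icc 1 (conj n lam c.2) := by
  obtain ⟨a, j⟩ := c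
  simp only [cells, Finset.mem_biUnion, Finset.mem_product, Finset.mem_singleton,
    Finset.mem_Icc]
  constructor
  · rintro ⟨a, ⟨ha, ha'⟩, rfl, hj, hja⟩
    exact ⟨⟨hj, hja.trans (lam_anti hanti le_rfl ha ha')⟩, ha, (le_conj_iff hanti ha ha').2 hja⟩
  · rintro ⟨⟨hj, -⟩, ha, hac⟩
    have ha' : a ≤ n - 1 := hac.trans (conj_le j)
    exact ⟨a, ⟨ha, ha'⟩, rfl, hj, (le_conj_iff hanti ha ha').1 hac⟩

lemma lamVec_eq_sum (u : ℕ) :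
    lamVec n lam u
      = ∑ j ∈ Finset.Icc 1 (lam 1), if u ∈ Finset.Icc 1 (conj n lam j) then 1 else 0 := by
  rw [Finset.sum_boole, lamVec]
  split_ifs with hu
  · have : (Finset.Icc 1 (lam 1)).filter (fun j => u ∈ Finset.Icc 1 (conj n lam j))
        = Finset.Icc 1 (lam u) := by
      ext j
      simp only [Finset.mem_filter, Finset.mem_Icc, le_conj_iff hanti hu.1 hu.2]
      have := lam_anti hanti le_rfl hu.1 hu.2
      omega
    rw [this, Nat.card_Icc, Nat.add_sub_cancel]
  · have : (Finset.Icc 1 (lam 1)).filter (fun j => u ∈ Finset.Icc 1 (conj n lam j)) = ∅ := by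
      ext j
      simp only [Finset.mem_filter, Finset.mem_Icc, Finset.notMem_empty, iff_false]
      have := conj_le (n := n) (lam := lam) j
      omega
    rw [this, Finset.card_empty, Nat.cast_zero]

end Conjugate

/-- The root `β_p` at position `p` of the λ-chain. -/
noncomputable def chainRoot (n : ℕ) (lam : ℕ → ℕ) (p : ℕ) : ℕ × ℕ :=
  (GammaChain n lam).getD p (0, 0)

/-- The level `l_p = #{j ≤ p : β_j = β_p}` of the affine reflection `r̂_p`. -/
noncomputable def chainLevel (n : ℕ) (lam : ℕ → ℕ) (p : ℕ) : ℤ :=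
  ((GammaChain n lam).take (p + 1)).count (chainRoot n lam p)

section Chain

variable {n : ℕ} {lam : ℕ → ℕ}

lemma mem_rowG {a k : ℕ} {x : ℕ × ℕ} : x ∈ rowG n a k ↔ x.1 = a ∧ k < x.2 ∧ x.2 ≤ n := by
  obtain ⟨x1, x2⟩ := x
  simp only [rowG, List.mem_map, List.mem_reverse, List.Ico.mem, Prod.mk.injEq]
  constructor
  · rintro ⟨b, hb, rfl, rfl⟩
    exact ⟨rfl, by omega, by omega⟩
  · rintro ⟨rfl, h1, h2⟩
    exact ⟨x2, ⟨by omega, by omega⟩, rfl, rfl⟩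

/-- `GammaSeg n k` and `GammaSeg' n k` are the cases `m = k` and `m = k + 1`. -/
lemma mem_flatMap_rowG {k m : ℕ} {x : ℕ × ℕ} :
    x ∈ (List.range k).reverse.flatMap (fun a0 => rowG n (a0 + 1) m)
      ↔ 1 ≤ x.1 ∧ x.1 ≤ k ∧ m < x.2 ∧ x.2 ≤ n := by
  simp only [List.mem_flatMap, List.mem_reverse, List.mem_range, mem_rowG]
  constructor
  · rintro ⟨a0, ha0, hx⟩
    omega
  · rintro ⟨h1, h2, h3, h4⟩
    exact ⟨x.1 - 1, by omega, by omega, h3, h4⟩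

lemma nodup_flatMap_rowG {k m : ℕ} :
    ((List.range k).reverse.flatMap (fun a0 => rowG n (a0 + 1) m)).Nodup := by
  refine List.nodup_flatMap.2 ⟨fun _ _ => ?_, ?_⟩
  · exact (List.nodup_reverse.2 (List.Ico.nodup _ _)).map fun b b' h => by simpa using h
  · refine (List.nodup_reverse.2 List.nodup_range).imp fun hab x hx hx' => ?_
    rw [mem_rowG] at hx hx'
    omega

lemma nodup_GammaFactor (j : ℕ) : (GammaFactor n lam j).Nodup := by
  unfold GammaFactor
  split_ifs
  exacts [nodup_flatMap_rowG, nodup_flatMap_rowG]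

lemma mem_GammaFactor_bounds {j : ℕ} {x : ℕ × ℕ} (h : x ∈ GammaFactor n lam j) :
    1 ≤ x.1 ∧ x.1 ≤ conj n lam j ∧ conj n lam j < x.2 ∧ x.2 ≤ n := by
  unfold GammaFactor at h
  split_ifs at h
  · have := mem_flatMap_rowG.1 h
    omega
  · exact mem_flatMap_rowG.1 h

/-- The root `(x.1, λ'_j + 1)` missing from a primed `Γ_j` is not `x`: `λ'_k < x.2` would force
`λ'_k = λ'_j` with `k < j`, against the minimality of `j`. -/
lemma mem_GammaFactor_of_lt {j k : ℕ} {x : ℕ × ℕ} (hkj : k < j) (hk : 1 ≤ k) (hx1 : 1 ≤ x.1)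
    (hxj : x.1 ≤ conj n lam j) (hxk : conj n lam k < x.2) (hxn : x.2 ≤ n) :
    x ∈ GammaFactor n lam j := by
  have hconj : conj n lam j ≤ conj n lam k := conj_anti hkj.le
  unfold GammaFactor
  split_ifs with hprimed
  · refine mem_flatMap_rowG.2 ⟨hx1, hxj, ?_, hxn⟩
    by_contra! hx2
    have := hprimed k hk (by omega)
    omega
  · exact mem_flatMap_rowG.2 ⟨hx1, hxj, by omega, hxn⟩

lemma GammaDown_eq_nil {j : ℕ} (h : lam 1 < j) : GammaDown n lam j = [] := by
  simp [GammaDown, show lam 1 + 1 - j = 0 by omega]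

lemma GammaDown_eq_append {j : ℕ} (h : j ≤ lam 1) :
    GammaDown n lam j = GammaDown n lam (j + 1) ++ GammaFactor n lam j := by
  unfold GammaDown
  rw [show lam 1 + 1 - j = (lam 1 + 1 - (j + 1)) + 1 by omega, List.range_succ_eq_map,
    List.reverse_cons, List.flatMap_append, ← List.map_reverse, List.flatMap_map]
  simp only [List.flatMap_cons, List.flatMap_nil, List.append_nil, zero_add]
  congr 2
  funext j0
  congr 1
  omega

lemma GammaDown_prefix {j j' : ℕ} (h : j ≤ j') : GammaDown n lam j' <+: GammaDown n lam j := by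
  induction j', h using Nat.le_induction with
  | base => exact List.prefix_refl _
  | succ j' _ ih =>
    refine List.IsPrefix.trans ?_ ih
    rcases le_or_gt j' (lam 1) with h | h
    · rw [GammaDown_eq_append h]
      exact List.prefix_append _ _
    · rw [GammaDown_eq_nil (by omega : lam 1 < j' + 1)]
      exact List.nil_prefix

lemma count_GammaDown (x : ℕ × ℕ) (j : ℕ) :
    (GammaDown n lam j).count x = ∑ j' ∈ Finset.Icc j (lam 1), (GammaFactor n lam j').count x := by
  induction h : lam 1 + 1 - j generalizing j with
  | zero => rw [GammaDown_eq_nil (by omega), Finset.Icc_eq_empty (by omega)]; rfl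
  | succ d ih =>
    rw [GammaDown_eq_append (by omega), List.count_append, ih (j + 1) (by omega),
      Finset.Icc_eq_cons_Ioc (show j ≤ lam 1 by omega), Finset.sum_cons,
      ← Finset.Icc_add_one_left_eq_Ioc, add_comm]

lemma exists_factor_of_lt_length_GammaDown {j p : ℕ} (hp : p < (GammaDown n lam j).length) :
    ∃ k, j ≤ k ∧ k ≤ lam 1 ∧
      (GammaDown n lam (k + 1)).length ≤ p ∧ p < (GammaDown n lam k).length := by
  have hnil : (GammaDown n lam (lam 1 + 1)).length = 0 := by
    simp [GammaDown_eq_nil (n := n) (lam := lam) (Nat.lt_succ_self _)]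
  have hex : ∃ k, (GammaDown n lam (k + 1)).length ≤ p := ⟨lam 1, by omega⟩
  classical
  have hjk : j ≤ Nat.find hex := by
    by_contra! hlt
    have := (GammaDown_prefix (n := n) (lam := lam) (show Nat.find hex + 1 ≤ j by omega)).length_le
    linarith [Nat.find_spec hex]
  refine ⟨Nat.find hex, hjk, Nat.find_min' hex (by omega), Nat.find_spec hex, ?_⟩
  rcases hjk.eq_or_lt with heq | hlt
  · rwa [← heq]
  · have := Nat.find_min hex (show Nat.find hex - 1 < Nat.find hex by omega)
    rw [Nat.sub_add_cancel (by omega)] at this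
    omega

lemma exists_factor_chainRoot {p : ℕ} (hp : p < (GammaChain n lam).length) :
    ∃ k, 2 ≤ k ∧ k ≤ lam 1 ∧ (∀ j, (GammaDown n lam (j + 1)).length ≤ p ↔ k ≤ j) ∧
      chainRoot n lam p ∈ GammaFactor n lam k ∧
      ((GammaChain n lam).take (p + 1)).count (chainRoot n lam p)
        = (GammaDown n lam (k + 1)).count (chainRoot n lam p) + 1 := by
  obtain ⟨k, hk2, hkl, hlo, hhi⟩ := exists_factor_of_lt_length_GammaDown hp
  have hiff : ∀ j, (GammaDown n lam (j + 1)).length ≤ p ↔ k ≤ j := fun j => by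
    constructor
    · intro hj
      by_contra! hjk
      have := (GammaDown_prefix (n := n) (lam := lam) (show j + 1 ≤ k by omega)).length_le
      omega
    · intro hkj
      exact (GammaDown_prefix (show k + 1 ≤ j + 1 by omega)).length_le.trans hlo
  have hpre : GammaDown n lam (k + 1) ++ GammaFactor n lam k <+: GammaChain n lam :=
    GammaDown_eq_append (n := n) hkl ▸ GammaDown_prefix hk2
  have hlen := congrArg List.length (GammaDown_eq_append (n := n) hkl)
  rw [List.length_append] at hlen
  exact ⟨k, hk2, hkl, hiff, List.getD_mem_and_count_take_of_append_prefix hpre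
    (nodup_GammaFactor k) hlo (hlen ▸ hhi)⟩

lemma one_le_chainRoot_fst_lt_snd {p : ℕ} (hp : p < (GammaChain n lam).length) :
    1 ≤ (chainRoot n lam p).1 ∧ (chainRoot n lam p).1 < (chainRoot n lam p).2 := by
  obtain ⟨k, -, -, -, hmem, -⟩ := exists_factor_chainRoot hp
  have := mem_GammaFactor_bounds hmem
  omega

lemma chainLevel_eq_card {p : ℕ} (hp : p < (GammaChain n lam).length) :
    chainLevel n lam p
      = ((Finset.Icc 1 (lam 1)).filter fun j => (GammaDown n lam (j + 1)).length ≤ p ∧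
          (chainRoot n lam p).1 ≤ conj n lam j ∧ conj n lam j < (chainRoot n lam p).2).card := by
  obtain ⟨k, hk2, hkl, hiff, hmem, hcount⟩ := exists_factor_chainRoot hp
  set β := chainRoot n lam p
  obtain ⟨hβ1, hβk, hkβ, hβn⟩ := mem_GammaFactor_bounds hmem
  have hterm : ∀ j ∈ Finset.Icc (k + 1) (lam 1), (GammaFactor n lam j).count β
      = if β.1 ≤ conj n lam j ∧ conj n lam j < β.2 then 1 else 0 := fun j hj => by
    rw [Finset.mem_Icc] at hj
    split_ifs with h
    · exact List.count_eq_one_of_mem (nodup_GammaFactor j)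
        (mem_GammaFactor_of_lt (by omega) (by omega) hβ1 h.1 hkβ hβn)
    · exact List.count_eq_zero_of_not_mem fun hmem' => h ⟨(mem_GammaFactor_bounds hmem').2.1,
        (mem_GammaFactor_bounds hmem').2.2.1⟩
  have hfilter : ((Finset.Icc 1 (lam 1)).filter fun j => (GammaDown n lam (j + 1)).length ≤ p ∧
        β.1 ≤ conj n lam j ∧ conj n lam j < β.2)
      = insert k ((Finset.Icc (k + 1) (lam 1)).filter fun j =>
        β.1 ≤ conj n lam j ∧ conj n lam j < β.2) := by
    ext j
    simp only [Finset.mem_filter, Finset.mem_Icc, Finset.mem_insert, hiff]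
    constructor
    · rintro ⟨⟨-, hjl⟩, hkj, hP⟩
      rcases hkj.eq_or_lt with rfl | hlt
      · exact Or.inl rfl
      · exact Or.inr ⟨⟨hlt, hjl⟩, hP⟩
    · rintro (rfl | ⟨⟨hkj, hjl⟩, hP⟩)
      · exact ⟨⟨by omega, hkl⟩, le_rfl, hβk, hkβ⟩
      · exact ⟨⟨by omega, hjl⟩, by omega, hP⟩
  rw [chainLevel, hcount, count_GammaDown, Finset.sum_congr rfl hterm, ← Finset.card_filter,
    hfilter, Finset.card_insert_of_notMem (by simp)]

end Chain

noncomputable def columnContent (n : ℕ) (lam : ℕ → ℕ) (J : Finset ℕ) (u : ℕ) : ℤ :=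
  ∑ j ∈ Finset.Icc 1 (lam 1),
    if (prodSel (GammaDown n lam (j + 1)) J).symm u ∈ Finset.Icc 1 (conj n lam j) then 1 else 0

section Core

variable {n : ℕ} {lam : ℕ → ℕ}

lemma content_fillingMap (hanti : ∀ i, 1 ≤ i → i < n - 1 → lam (i + 1) ≤ lam i)
    (w : Equiv.Perm ℕ) (J : Finset ℕ) (i : ℕ) :
    content n lam (fillingMap n lam w J) i = columnContent n lam J (w.symm i) := by
  rw [content, ← Finset.sum_boole]
  refine (Finset.sum_finset_product_right' _ _ (fun j => Finset.Icc 1 (conj n lam j))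
    (fun c => mem_cells_iff hanti)
    (f := fun a j => if piPerm n lam w J j a = i then (1 : ℤ) else 0)).trans
    (Finset.sum_congr rfl fun j _ => ?_)
  simp only [piPerm, Equiv.Perm.mul_apply, ← Equiv.eq_symm_apply]
  exact Finset.sum_ite_eq' _ _ _

lemma muWeight_eq_rhat_erase_min {J : Finset ℕ} {p : ℕ} (hp : p ∈ J) (hmin : ∀ t ∈ J, p ≤ t) :
    muWeight n lam J = rhat n lam p (muWeight n lam (J.erase p)) := by
  have hsort : J.sort (· ≤ ·) = p :: (J.erase p).sort (· ≤ ·) := by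
    conv_lhs => rw [← Finset.insert_erase hp]
    exact Finset.sort_insert _ (fun t ht => hmin t (Finset.mem_of_mem_erase ht))
      (Finset.notMem_erase p J)
  rw [muWeight, hsort, List.foldr_cons]
  rfl

lemma rhat_apply (p : ℕ) (v : ℕ → ℤ) (u : ℕ) :
    rhat n lam p v u = v (Equiv.swap (chainRoot n lam p).1 (chainRoot n lam p).2 u)
      + chainLevel n lam p * ((if u = (chainRoot n lam p).1 then 1 else 0)
        - (if u = (chainRoot n lam p).2 then 1 else 0)) :=
  sub_reflection_eq_swap_add v _ _ u _

lemma columnContent_eq_erase_min {J : Finset ℕ} {p : ℕ} (hp : p ∈ J) (hmin : ∀ t ∈ J, p ≤ t)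
    (hlen : p < (GammaChain n lam).length) (u : ℕ) :
    columnContent n lam J u
      = columnContent n lam (J.erase p)
          (Equiv.swap (chainRoot n lam p).1 (chainRoot n lam p).2 u)
        + chainLevel n lam p * ((if u = (chainRoot n lam p).1 then 1 else 0)
          - (if u = (chainRoot n lam p).2 then 1 else 0)) := by
  set a := (chainRoot n lam p).1
  set b := (chainRoot n lam p).2
  obtain ⟨ha, hab⟩ : 1 ≤ a ∧ a < b := one_le_chainRoot_fst_lt_snd hlen
  have hcolumn : ∀ j ∈ Finset.Icc 1 (lam 1),
      (if (prodSel (GammaDown n lam (j + 1)) J).symm u ∈ Finset.Icc 1 (conj n lam j)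
        then 1 else 0 : ℤ)
      = (if (prodSel (GammaDown n lam (j + 1)) (J.erase p)).symm (Equiv.swap a b u)
          ∈ Finset.Icc 1 (conj n lam j) then 1 else 0)
        + ((if u = a then 1 else 0) - (if u = b then 1 else 0))
          * (if (GammaDown n lam (j + 1)).length ≤ p ∧ a ≤ conj n lam j ∧ conj n lam j < b
              then 1 else 0) := by
    intro j hj
    by_cases hshort : (GammaDown n lam (j + 1)).length ≤ p
    · rw [prodSel_eq_one_of_length_le fun t ht => hshort.trans (hmin t ht),
        prodSel_eq_one_of_length_le fun t ht => hshort.trans (hmin t (Finset.mem_of_mem_erase ht))]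
      simp only [hshort, true_and]
      exact ite_mem_Icc_eq_swap_add ha hab
    · push Not at hshort
      have hpre : GammaDown n lam (j + 1) <+: GammaChain n lam :=
        GammaDown_prefix (by simp at hj; omega)
      have hroot : (GammaDown n lam (j + 1)).getD p (0, 0) = chainRoot n lam p := by
        rw [chainRoot, List.getD_eq_getElem _ _ hshort, List.getD_eq_getElem _ _ hlen]
        exact hpre.getElem hshort
      rw [prodSel_eq_swap_mul_erase hp hmin hshort, hroot]
      simp [Equiv.Perm.mul_def, hshort.not_ge, a, b]
  have hlevel : ∑ j ∈ Finset.Icc 1 (lam 1),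
      (if (GammaDown n lam (j + 1)).length ≤ p ∧ a ≤ conj n lam j ∧ conj n lam j < b
        then 1 else 0 : ℤ) = chainLevel n lam p := by
    rw [Finset.sum_boole, chainLevel_eq_card hlen]
  rw [columnContent, Finset.sum_congr rfl hcolumn, Finset.sum_add_distrib, ← Finset.mul_sum,
    hlevel, mul_comm]
  rfl

lemma muWeight_eq_columnContent (hanti : ∀ i, 1 ≤ i → i < n - 1 → lam (i + 1) ≤ lam i)
    (J : Finset ℕ) (hJ : J ⊆ Finset.range (GammaChain n lam).length) :
    muWeight n lam J = columnContent n lam J := by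
  induction J using Finset.strongInduction with
  | H J ih =>
  funext u
  rcases J.eq_empty_or_nonempty with rfl | hne
  · simp only [muWeight, Finset.sort_empty, List.foldr_nil, columnContent,
      prodSel_eq_one_of_length_le (J := ∅) fun _ ht => absurd ht (Finset.notMem_empty _)]
    exact lamVec_eq_sum hanti u
  · set p := J.min' hne
    have hp : p ∈ J := J.min'_mem hne
    have hmin : ∀ t ∈ J, p ≤ t := fun t ht => J.min'_le t ht
    rw [muWeight_eq_rhat_erase_min hp hmin, rhat_apply,
      ih _ (Finset.erase_ssubset hp) ((Finset.erase_subset p J).trans hJ),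
      columnContent_eq_erase_min hp hmin (Finset.mem_range.1 (hJ hp))]

end Core

theorem content_eq_weight_general (n : ℕ) (lam : ℕ → ℕ)
    (hstrict : ∀ i, 1 ≤ i → i < n - 1 → lam (i + 1) < lam i)
    (w : Equiv.Perm ℕ)
    (J : Finset ℕ) (hJ : J ⊆ Finset.range (GammaChain n lam).length) :
    ∃ cst : ℤ, ∀ i ∈ Finset.Icc 1 n,
      content n lam (fillingMap n lam w J) i
        = muWeight n lam J (w.symm i) + cst := by
  have hanti : ∀ i, 1 ≤ i → i < n - 1 → lam (i + 1) ≤ lam i := fun i h₁ h₂ => (hstrict i h₁ h₂).le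
  refine ⟨0, fun i _ => ?_⟩
  rw [content_fillingMap hanti, muWeight_eq_columnContent hanti J hJ, add_zero]

theorem content_eq_weight (n : ℕ) (lam : ℕ → ℕ) (hn : 2 ≤ n)
    (hstrict : ∀ i, 1 ≤ i → i < n - 1 → lam (i + 1) < lam i)
    (hpos : 0 < lam (n - 1))
    (w : Equiv.Perm ℕ) (hw : IsSnPerm n w)
    (J : Finset ℕ) (hJ : J ⊆ Finset.range (GammaChain n lam).length) :
    ∃ cst : ℤ, ∀ i ∈ Finset.Icc 1 n,
      content n lam (fillingMap n lam w J) i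
        = muWeight n lam J (w.symm i) + cst :=
  content_eq_weight_general n lam hstrict w J hJ

end Stmt8
end

section
/- Let τ be a filling of a strict partition λ (type C setting, entries in [n̄]) whose rows weakly decrease left to right, and such that two entries a,b with a = ±b never occur in the same column nor in consecutive columns at positions (i,j) and (k,j−1) with i > k. Let τ² be the filling of 2λ obtained by doubling each column. Then there is a unique filling σ ∈ T(λ̂, n̄) whose compressed version σ̄ equals τ². -/
/-!
The filling is forced. In block `i` the primed columns satisfy
`τ_i = C'_{i2} ≥ ⋯ ≥ C'_{i,λ'_i} ≥ C_{i1} = τ_i` entrywise, so all of them equal `τ_i`.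
A step `C_{ij} → C_{i,j+1}` reflects only rows `r < j` and rewrites row `j`, so `C_{ij}`
agrees with `τ_i` from row `j` on. Going leftwards from `C_{i,λ'_i+1} = τ_{i-1}`: once the
rows `≤ j` of `C_{i,j+1}` are those of `τ_{i-1}`, a reflection `(r, j̄)` would force
`τ_{i-1}(r) = -τ_i(j)` with `r < j`, which the hypothesis on `τ` forbids; so the step has no
reflection and `C_{ij}` agrees with `τ_{i-1}` above row `j`. Conversely these columns lie in
`T(λ̂, n̄)`, each step lowering the single entry `τ_i(j)` to `τ_{i-1}(j)`.
-/

namespace Stmt15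


def conjC (n : ℕ) (lam : ℕ → ℕ) (j : ℕ) : ℕ :=
  ((Finset.Icc 1 n).filter fun i => j ≤ lam i).card

/-- the position of x in the linear order [n̄] = {1 < ⋯ < n < n̄ < ⋯ < 1̄} (ī = -i) -/
def mval (n : ℕ) (x : ℤ) : ℤ := if 0 < x then x else 2 * n + 1 + x

/-- strict order on [n̄] -/
def olt (n : ℕ) (x y : ℤ) : Prop := mval n x < mval n y

instance (n : ℕ) (x y : ℤ) : Decidable (olt n x y) := by unfold olt; infer_instance

/-- weak order on [n̄] -/
def cle (n : ℕ) (x y : ℤ) : Prop := mval n x ≤ mval n y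

instance (n : ℕ) (x y : ℤ) : Decidable (cle n x y) := by unfold cle; infer_instance

def ValidEntry (n : ℕ) (x : ℤ) : Prop := x ≠ 0 ∧ |x| ≤ (n : ℤ)

/-- `C(r,j̄)`: transpose positions r, j and change the signs of the transposed entries -/
def opCol (D : ℕ → ℤ) (r j : ℕ) : ℕ → ℤ :=
  fun t => if t = r then -(D j) else if t = j then -(D r) else D t

/-- `C(r₁,j̄)⋯(r_p,j̄)` for rs = [r₁,…,r_p] -/
def applyRs (D : ℕ → ℤ) (j : ℕ) (rs : List ℕ) : ℕ → ℤ :=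
  rs.foldl (fun E r => opCol E r j) D

/-- a valid column of height d: entries in [n̄], no two entries equal up to sign -/
def ColCond (n d : ℕ) (C : ℕ → ℤ) : Prop :=
  (∀ t ∈ Finset.Icc 1 d, ValidEntry n (C t)) ∧
  (∀ s ∈ Finset.Icc 1 d, ∀ t ∈ Finset.Icc 1 d, s ≠ t → C s ≠ C t ∧ C s ≠ -C t)

/-- a filling of the doubled shape λ̂, given by its columns C_{ij} and C'_{ik} -/
structure FillC where
  Cc : ℕ → ℕ → ℕ → ℤ
  Cp : ℕ → ℕ → ℕ → ℤ

/-- the unprimed column indices of block i (block 1 consists of C_{11} only) -/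
def jRange (n : ℕ) (lam : ℕ → ℕ) (i : ℕ) : Finset ℕ :=
  if i = 1 then {1} else Finset.Icc 1 (conjC n lam i)

/-- the right neighbour C_{i,j+1} of C_{ij}, with the conventions
C_{i,λ'_i+1} = C'_{i-1,2} (or C_{i-1,1} if λ'_{i-1} = 1) -/
def nextU (n : ℕ) (lam : ℕ → ℕ) (F : FillC) (i j : ℕ) : ℕ → ℤ :=
  if j < conjC n lam i then F.Cc i (j + 1)
  else if conjC n lam (i - 1) = 1 then F.Cc (i - 1) 1 else F.Cp (i - 1) 2

/-- the right neighbour C'_{i,k+1} of C'_{ik}, with the convention C'_{i,λ'_i+1} = C_{i1} -/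
def nextP (n : ℕ) (lam : ℕ → ℕ) (F : FillC) (i k : ℕ) : ℕ → ℤ :=
  if k < conjC n lam i then F.Cp i (k + 1) else F.Cc i 1

/-- the relation between C_{ij} and C_{i,j+1}: there are positions r₁ < ⋯ < r_p < j such
that C_{i,j+1} differs from D = C_{ij}(r₁,j̄)⋯(r_p,j̄) only in position j, while
C_{i,j+1}(j) ∉ {±D(r) : r ∈ [d] \ {j}} and C_{i,j+1}(j) ≤ D(j) -/
def UnprimedRel (n d j : ℕ) (D E : ℕ → ℤ) : Prop :=
  ∃ rs : List ℕ, rs.Chain' (· < ·) ∧ (∀ r ∈ rs, 1 ≤ r ∧ r < j) ∧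
    (∀ t ∈ Finset.Icc 1 d, t ≠ j → E t = applyRs D j rs t) ∧
    (∀ r ∈ Finset.Icc 1 d, r ≠ j → E j ≠ applyRs D j rs r ∧ E j ≠ -(applyRs D j rs r)) ∧
    cle n (E j) (applyRs D j rs j)

/-- the relation between C'_{ik} and C'_{i,k+1}: C'_{i,k+1} = C'_{ik}(r₁,k̄)⋯(r_p,k̄)
for some positions r₁ < ⋯ < r_p < k -/
def PrimedRel (d k : ℕ) (D E : ℕ → ℤ) : Prop :=
  ∃ rs : List ℕ, rs.Chain' (· < ·) ∧ (∀ r ∈ rs, 1 ≤ r ∧ r < k) ∧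
    ∀ t ∈ Finset.Icc 1 d, E t = applyRs D k rs t

/-- membership in T(λ̂,n̄): rows weakly decreasing left to right, no column containing
a,b with a = ±b, and adjacent columns related by the prescribed reflections -/
def MemT (n : ℕ) (lam : ℕ → ℕ) (F : FillC) : Prop :=
  (∀ i ∈ Finset.Icc 1 (lam 1),
    (∀ j ∈ jRange n lam i, ColCond n (conjC n lam i) (F.Cc i j)) ∧
    (∀ k ∈ Finset.Icc 2 (conjC n lam i), ColCond n (conjC n lam i) (F.Cp i k))) ∧
  (∀ i ∈ Finset.Icc 2 (lam 1), ∀ j ∈ Finset.Icc 1 (conjC n lam i),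
    UnprimedRel n (conjC n lam i) j (F.Cc i j) (nextU n lam F i j) ∧
    ∀ t ∈ Finset.Icc 1 (conjC n lam i),
      cle n (nextU n lam F i j t) (F.Cc i j t)) ∧
  (∀ i ∈ Finset.Icc 1 (lam 1), ∀ k ∈ Finset.Icc 2 (conjC n lam i),
    PrimedRel (conjC n lam i) k (F.Cp i k) (nextP n lam F i k) ∧
    ∀ t ∈ Finset.Icc 1 (conjC n lam i),
      cle n (nextP n lam F i k t) (F.Cp i k t))

/-- normalization: zero outside the meaningful range of indices -/
def NormF (n : ℕ) (lam : ℕ → ℕ) (F : FillC) : Prop :=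
  (∀ i j t, ¬(i ∈ Finset.Icc 1 (lam 1) ∧ j ∈ jRange n lam i ∧
      t ∈ Finset.Icc 1 (conjC n lam i)) → F.Cc i j t = 0) ∧
  (∀ i k t, ¬(i ∈ Finset.Icc 1 (lam 1) ∧ k ∈ Finset.Icc 2 (conjC n lam i) ∧
      t ∈ Finset.Icc 1 (conjC n lam i)) → F.Cp i k t = 0)

/-- the column C'_{i2} of the compressed filling σ̄ (with the conventions: it is C_{i1}
when λ'_i = 1) -/
def col2 (n : ℕ) (lam : ℕ → ℕ) (F : FillC) (i : ℕ) : ℕ → ℤ :=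
  if 2 ≤ conjC n lam i then F.Cp i 2 else F.Cc i 1

/-- number of occurrences of the entry v in the compressed filling σ̄ of shape 2λ -/
def cntEnt (n : ℕ) (lam : ℕ → ℕ) (F : FillC) (v : ℤ) : ℕ :=
  ∑ i ∈ Finset.Icc 1 (lam 1),
    (((Finset.Icc 1 (conjC n lam i)).filter fun t => col2 n lam F i t = v).card +
     ((Finset.Icc 1 (conjC n lam i)).filter fun t => F.Cc i 1 t = v).card)

/-- τ is an admissible filling of λ (given by its columns tcol i of height λ'_i):
entries in [n̄], rows weakly decreasing left to right, and no pair a = ±b in the same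
column or in consecutive columns at positions (i,j), (k,j-1) with i > k -/
def TauCond (n : ℕ) (lam : ℕ → ℕ) (tcol : ℕ → ℕ → ℤ) : Prop :=
  (∀ c ∈ Finset.Icc 1 (lam 1), ∀ t ∈ Finset.Icc 1 (conjC n lam c),
    ValidEntry n (tcol c t)) ∧
  (∀ c ∈ Finset.Icc 1 (lam 1 - 1), ∀ t ∈ Finset.Icc 1 (conjC n lam (c + 1)),
    cle n (tcol c t) (tcol (c + 1) t)) ∧
  (∀ c ∈ Finset.Icc 1 (lam 1), ∀ s ∈ Finset.Icc 1 (conjC n lam c),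
    ∀ t ∈ Finset.Icc 1 (conjC n lam c), s ≠ t →
      tcol c s ≠ tcol c t ∧ tcol c s ≠ -(tcol c t)) ∧
  (∀ c ∈ Finset.Icc 2 (lam 1), ∀ r ∈ Finset.Icc 1 (conjC n lam c),
    ∀ s ∈ Finset.Icc 1 (conjC n lam (c - 1)), s < r →
      tcol c r ≠ tcol (c - 1) s ∧ tcol c r ≠ -(tcol (c - 1) s))

/-- the compressed version σ̄ of σ equals τ² (the column-doubling of τ) -/
def CompressEq (n : ℕ) (lam : ℕ → ℕ) (F : FillC) (tcol : ℕ → ℕ → ℤ) : Prop :=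
  ∀ i ∈ Finset.Icc 1 (lam 1), ∀ t ∈ Finset.Icc 1 (conjC n lam i),
    col2 n lam F i t = tcol i t ∧ F.Cc i 1 t = tcol i t

open Finset

theorem eq_of_mval_eq {n : ℕ} {x y : ℤ} (hx : ValidEntry n x) (hy : ValidEntry n y)
    (h : mval n x = mval n y) : x = y := by
  obtain ⟨hx0, hx1⟩ := hx
  obtain ⟨hy0, hy1⟩ := hy
  rw [abs_le] at hx1 hy1
  unfold mval at h
  split_ifs at h <;> omega

theorem conjC_antitone (n : ℕ) (lam : ℕ → ℕ) : Antitone (conjC n lam) :=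
  fun _ _ hab => card_le_card fun _ hx => by
    rw [mem_filter] at hx ⊢
    exact ⟨hx.1, hab.trans hx.2⟩

theorem antitoneOn_Icc_of_succ_le {α : Type*} [Preorder α] {f : ℕ → α} {a b : ℕ}
    (hf : ∀ k, a ≤ k → k < b → f (k + 1) ≤ f k) : AntitoneOn f (Set.Icc a b) := by
  rintro l ⟨hal, -⟩ m ⟨-, hmb⟩ hlm
  induction m, hlm using Nat.le_induction with
  | base => exact le_rfl
  | succ m hlm ih => exact (hf m (hal.trans hlm) hmb).trans (ih (by omega))

theorem applyRs_of_not_mem {D : ℕ → ℤ} {j t : ℕ} {rs : List ℕ} (hrs : t ∉ rs)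
    (hj : t ≠ j) : applyRs D j rs t = D t := by
  induction rs generalizing D with
  | nil => rfl
  | cons r rest ih =>
    rw [List.mem_cons, not_or] at hrs
    simp only [applyRs, List.foldl_cons] at ih ⊢
    rw [ih hrs.2, opCol, if_neg hrs.1, if_neg hj]

theorem applyRs_cons_self {D : ℕ → ℤ} {j r : ℕ} {rest : List ℕ} (hr : r ∉ rest)
    (hj : r ≠ j) : applyRs D j (r :: rest) r = -D j := by
  simp only [applyRs, List.foldl_cons]
  rw [← applyRs, applyRs_of_not_mem hr hj, opCol, if_pos rfl]

theorem ColCond.congr {n d : ℕ} {C C' : ℕ → ℤ} (hC : ColCond n d C)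
    (h : ∀ t ∈ Icc 1 d, C t = C' t) : ColCond n d C' :=
  ⟨fun t ht => h t ht ▸ hC.1 t ht,
    fun s hs t ht hst => h s hs ▸ h t ht ▸ hC.2 s hs t ht hst⟩

def spliceCol (A B : ℕ → ℤ) (j : ℕ) : ℕ → ℤ := fun t => if t < j then A t else B t

theorem colCond_spliceCol {n d d' j : ℕ} {A B : ℕ → ℤ} (hA : ColCond n d' A)
    (hB : ColCond n d B) (hd : d ≤ d')
    (hAB : ∀ r ∈ Icc 1 d, ∀ s ∈ Icc 1 d', s < r → B r ≠ A s ∧ B r ≠ -A s) :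
    ColCond n d (spliceCol A B j) := by
  have hIcc : ∀ t ∈ Icc 1 d, t ∈ Icc 1 d' := fun t ht => Icc_subset_Icc_right hd ht
  refine ⟨fun t ht => ?_, fun s hs t ht hst => ?_⟩
  · unfold spliceCol; split_ifs
    exacts [hA.1 t (hIcc t ht), hB.1 t ht]
  · unfold spliceCol; split_ifs with hsj htj htj
    · exact hA.2 s (hIcc s hs) t (hIcc t ht) hst
    · have := hAB t ht s (hIcc s hs) (by omega); omega
    · exact hAB s hs t (hIcc t ht) (by omega)
    · exact hB.2 s hs t ht hst

theorem UnprimedRel.apply_of_gt {n d j t : ℕ} {D E : ℕ → ℤ} (h : UnprimedRel n d j D E)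
    (ht : t ∈ Icc 1 d) (hjt : j < t) : E t = D t := by
  obtain ⟨rs, -, hrs, hoff, -⟩ := h
  rw [hoff t ht hjt.ne', applyRs_of_not_mem (fun hmem => by have := hrs t hmem; omega) hjt.ne']

/-- The first reflection `(r, j̄)` would put `-D j` at a position `r < j`. -/
theorem UnprimedRel.apply_of_lt {n d j t : ℕ} {D E : ℕ → ℤ} (h : UnprimedRel n d j D E)
    (hj : j ≤ d) (hE : ∀ r, 1 ≤ r → r < j → E r ≠ -D j) (ht : 1 ≤ t) (htj : t < j) :
    D t = E t := by
  obtain ⟨rs, hchain, hrs, hoff, -⟩ := h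
  cases rs with
  | nil => exact (hoff t (mem_Icc.2 ⟨ht, by omega⟩) htj.ne).symm
  | cons r rest =>
    have hr := hrs r List.mem_cons_self
    have hrest : r ∉ rest := fun hmem =>
      lt_irrefl r ((List.pairwise_cons.1 (List.isChain_iff_pairwise.1 hchain)).1 r hmem)
    have := hoff r (mem_Icc.2 ⟨hr.1, by omega⟩) hr.2.ne
    rw [applyRs_cons_self hrest hr.2.ne] at this
    exact absurd this (hE r hr.1 hr.2)

theorem unprimedRel_of_colCond {n d j : ℕ} {D E : ℕ → ℤ} (hE : ColCond n d E)
    (hj : j ∈ Icc 1 d) (hoff : ∀ t ∈ Icc 1 d, t ≠ j → E t = D t)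
    (hle : cle n (E j) (D j)) :
    UnprimedRel n d j D E :=
  ⟨[], List.isChain_nil, by simp, hoff,
    fun r hr hrj => by
      show E j ≠ D r ∧ E j ≠ -D r
      rw [← hoff r hr hrj]
      exact hE.2 j hj r hr (Ne.symm hrj), hle⟩

theorem jRange_one (n : ℕ) (lam : ℕ → ℕ) : jRange n lam 1 = {1} := if_pos rfl

theorem jRange_of_ne_one (n : ℕ) (lam : ℕ → ℕ) {i : ℕ} (hi : i ≠ 1) :
    jRange n lam i = Icc 1 (conjC n lam i) := if_neg hi

section Neighbours

variable {n : ℕ} {lam : ℕ → ℕ} {F : FillC} {i : ℕ}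

theorem nextU_of_lt {j : ℕ} (hj : j < conjC n lam i) : nextU n lam F i j = F.Cc i (j + 1) :=
  if_pos hj

theorem nextP_of_lt {k : ℕ} (hk : k < conjC n lam i) : nextP n lam F i k = F.Cp i (k + 1) :=
  if_pos hk

variable {tcol : ℕ → ℕ → ℤ} {t : ℕ}

theorem CompressEq.nextU_apply (hC : CompressEq n lam F tcol) (hi : i ∈ Icc 2 (lam 1)) {j : ℕ}
    (hj : conjC n lam i ≤ j) (ht : t ∈ Icc 1 (conjC n lam i)) :
    nextU n lam F i j t = tcol (i - 1) t := by
  rw [mem_Icc] at hi ht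
  have hd := conjC_antitone n lam (Nat.sub_le i 1)
  rw [← (hC (i - 1) (mem_Icc.2 ⟨by omega, by omega⟩) t (mem_Icc.2 ⟨ht.1, by omega⟩)).1]
  unfold nextU col2
  rw [if_neg (by omega)]
  split_ifs <;> first | rfl | omega

theorem CompressEq.nextP_one (hC : CompressEq n lam F tcol) (hi : i ∈ Icc 1 (lam 1))
    (ht : t ∈ Icc 1 (conjC n lam i)) : nextP n lam F i 1 t = tcol i t := by
  rw [← (hC i hi t ht).1]
  unfold nextP col2
  split_ifs <;> first | rfl | omega

theorem CompressEq.nextP_self (hC : CompressEq n lam F tcol) (hi : i ∈ Icc 1 (lam 1))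
    (ht : t ∈ Icc 1 (conjC n lam i)) : nextP n lam F i (conjC n lam i) t = tcol i t := by
  rw [nextP, if_neg (lt_irrefl _), (hC i hi t ht).2]

end Neighbours

namespace TauCond

variable {n : ℕ} {lam : ℕ → ℕ} {tcol : ℕ → ℕ → ℤ} {i : ℕ}

theorem colCond (hτ : TauCond n lam tcol) (hi : i ∈ Icc 1 (lam 1)) :
    ColCond n (conjC n lam i) (tcol i) :=
  ⟨hτ.1 i hi, hτ.2.2.1 i hi⟩

theorem cle_pred (hτ : TauCond n lam tcol) (hi : i ∈ Icc 2 (lam 1)) {t : ℕ}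
    (ht : t ∈ Icc 1 (conjC n lam i)) :
    cle n (tcol (i - 1) t) (tcol i t) := by
  rw [mem_Icc] at hi
  obtain ⟨c, rfl⟩ : ∃ c, i = c + 1 := ⟨i - 1, by omega⟩
  exact hτ.2.1 c (mem_Icc.2 ⟨by omega, by omega⟩) t ht

theorem pred_ne_neg (hτ : TauCond n lam tcol) (hi : i ∈ Icc 2 (lam 1)) {r j : ℕ} (hr : 1 ≤ r)
    (hrj : r < j) (hj : j ≤ conjC n lam i) : tcol (i - 1) r ≠ -tcol i j := by
  have hd := conjC_antitone n lam (Nat.sub_le i 1)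
  have := (hτ.2.2.2 i hi j (mem_Icc.2 ⟨by omega, hj⟩) r (mem_Icc.2 ⟨hr, by omega⟩) hrj).2
  omega

theorem colCond_spliceCol (hτ : TauCond n lam tcol) (hi : i ∈ Icc 2 (lam 1)) (j : ℕ) :
    ColCond n (conjC n lam i) (spliceCol (tcol (i - 1)) (tcol i) j) := by
  rw [mem_Icc] at hi
  exact Stmt15.colCond_spliceCol (hτ.colCond (mem_Icc.2 ⟨by omega, by omega⟩))
    (hτ.colCond (mem_Icc.2 ⟨by omega, hi.2⟩)) (conjC_antitone n lam (Nat.sub_le i 1))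
    (hτ.2.2.2 i (mem_Icc.2 hi))

end TauCond

def fillingOfTau (n : ℕ) (lam : ℕ → ℕ) (tcol : ℕ → ℕ → ℤ) : FillC where
  Cc i j t := if i ∈ Icc 1 (lam 1) ∧ j ∈ jRange n lam i ∧ t ∈ Icc 1 (conjC n lam i) then
    spliceCol (tcol (i - 1)) (tcol i) j t else 0
  Cp i k t :=
    if i ∈ Icc 1 (lam 1) ∧ k ∈ Icc 2 (conjC n lam i) ∧ t ∈ Icc 1 (conjC n lam i) then
      tcol i t
    else 0

section FillingOfTau

variable {n : ℕ} {lam : ℕ → ℕ} {tcol : ℕ → ℕ → ℤ} {i t : ℕ}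

theorem fillingOfTau_Cc {j : ℕ} (hi : i ∈ Icc 1 (lam 1)) (hj : j ∈ jRange n lam i)
    (ht : t ∈ Icc 1 (conjC n lam i)) :
    (fillingOfTau n lam tcol).Cc i j t = spliceCol (tcol (i - 1)) (tcol i) j t :=
  if_pos ⟨hi, hj, ht⟩

theorem fillingOfTau_Cp {k : ℕ} (hi : i ∈ Icc 1 (lam 1)) (hk : k ∈ Icc 2 (conjC n lam i))
    (ht : t ∈ Icc 1 (conjC n lam i)) : (fillingOfTau n lam tcol).Cp i k t = tcol i t :=
  if_pos ⟨hi, hk, ht⟩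

theorem normF_fillingOfTau : NormF n lam (fillingOfTau n lam tcol) :=
  ⟨fun _ _ _ h => if_neg h, fun _ _ _ h => if_neg h⟩

theorem compressEq_fillingOfTau : CompressEq n lam (fillingOfTau n lam tcol) tcol := by
  intro i hi t ht
  have hCc1 : (fillingOfTau n lam tcol).Cc i 1 t = tcol i t := by
    have h1 : 1 ∈ jRange n lam i := by
      unfold jRange; split_ifs
      exacts [mem_singleton_self 1, mem_Icc.2 ⟨le_rfl, (mem_Icc.1 ht).1.trans (mem_Icc.1 ht).2⟩]
    rw [fillingOfTau_Cc hi h1 ht, spliceCol, if_neg (by have := (mem_Icc.1 ht).1; omega)]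
  refine ⟨?_, hCc1⟩
  unfold col2
  split_ifs with h2
  exacts [fillingOfTau_Cp hi (mem_Icc.2 ⟨le_rfl, h2⟩) ht, hCc1]

theorem fillingOfTau_nextU (hi : i ∈ Icc 2 (lam 1)) {j : ℕ} (hj : j ∈ Icc 1 (conjC n lam i))
    (ht : t ∈ Icc 1 (conjC n lam i)) :
    nextU n lam (fillingOfTau n lam tcol) i j t = spliceCol (tcol (i - 1)) (tcol i) (j + 1) t := by
  rw [mem_Icc] at hi hj ht
  by_cases hjd : j < conjC n lam i
  · rw [nextU_of_lt hjd, fillingOfTau_Cc (mem_Icc.2 ⟨by omega, hi.2⟩)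
      (by rw [jRange_of_ne_one n lam (by omega)]; exact mem_Icc.2 ⟨by omega, hjd⟩)
      (mem_Icc.2 ht)]
  · rw [compressEq_fillingOfTau.nextU_apply (mem_Icc.2 hi) (by omega) (mem_Icc.2 ht), spliceCol,
      if_pos (by omega)]

theorem colCond_fillingOfTau (hτ : TauCond n lam tcol) (hi : i ∈ Icc 1 (lam 1)) :
    (∀ j ∈ jRange n lam i, ColCond n (conjC n lam i) ((fillingOfTau n lam tcol).Cc i j)) ∧
    ∀ k ∈ Icc 2 (conjC n lam i),
      ColCond n (conjC n lam i) ((fillingOfTau n lam tcol).Cp i k) := by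
  refine ⟨fun j hj => ?_, fun k hk => ?_⟩
  · by_cases hi1 : i = 1
    · subst hi1
      rw [jRange_one, mem_singleton] at hj
      subst hj
      refine (hτ.colCond hi).congr fun t ht => ?_
      rw [fillingOfTau_Cc hi (by rw [jRange_one]; exact mem_singleton_self 1) ht, spliceCol,
        if_neg (by have := (mem_Icc.1 ht).1; omega)]
    · have hi2 : i ∈ Icc 2 (lam 1) := by rw [mem_Icc] at hi ⊢; omega
      exact (hτ.colCond_spliceCol hi2 j).congr fun t ht => (fillingOfTau_Cc hi hj ht).symm
  · exact (hτ.colCond hi).congr fun t ht => (fillingOfTau_Cp hi hk ht).symm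

theorem unprimedRel_fillingOfTau (hτ : TauCond n lam tcol) (hi : i ∈ Icc 2 (lam 1)) {j : ℕ}
    (hj : j ∈ Icc 1 (conjC n lam i)) :
    UnprimedRel n (conjC n lam i) j ((fillingOfTau n lam tcol).Cc i j)
        (nextU n lam (fillingOfTau n lam tcol) i j) ∧
      ∀ t ∈ Icc 1 (conjC n lam i),
        cle n (nextU n lam (fillingOfTau n lam tcol) i j t)
          ((fillingOfTau n lam tcol).Cc i j t) := by
  have hi1 : i ∈ Icc 1 (lam 1) := Icc_subset_Icc_left one_le_two hi
  have hD : ∀ t ∈ Icc 1 (conjC n lam i),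
      (fillingOfTau n lam tcol).Cc i j t = spliceCol (tcol (i - 1)) (tcol i) j t :=
    fun t ht => fillingOfTau_Cc hi1
      (by rwa [jRange_of_ne_one n lam (by rw [mem_Icc] at hi; omega)]) ht
  have hoff : ∀ t ∈ Icc 1 (conjC n lam i), t ≠ j →
      nextU n lam (fillingOfTau n lam tcol) i j t = (fillingOfTau n lam tcol).Cc i j t := by
    intro t ht htj
    rw [fillingOfTau_nextU hi hj ht, hD t ht, spliceCol, spliceCol]
    split_ifs <;> first | rfl | omega
  have hle : ∀ t ∈ Icc 1 (conjC n lam i),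
      cle n (nextU n lam (fillingOfTau n lam tcol) i j t) ((fillingOfTau n lam tcol).Cc i j t) := by
    intro t ht
    by_cases htj : t = j
    · subst htj
      rw [fillingOfTau_nextU hi hj ht, hD t ht, spliceCol, spliceCol, if_pos (by omega),
        if_neg (by omega)]
      exact hτ.cle_pred hi ht
    · rw [hoff t ht htj]
      exact le_rfl
  refine ⟨unprimedRel_of_colCond ((hτ.colCond_spliceCol hi (j + 1)).congr fun t ht => ?_) hj
    hoff (hle j hj), hle⟩
  exact (fillingOfTau_nextU hi hj ht).symm

theorem primedRel_fillingOfTau (hi : i ∈ Icc 1 (lam 1)) {k : ℕ}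
    (hk : k ∈ Icc 2 (conjC n lam i)) :
    PrimedRel (conjC n lam i) k ((fillingOfTau n lam tcol).Cp i k)
        (nextP n lam (fillingOfTau n lam tcol) i k) ∧
      ∀ t ∈ Icc 1 (conjC n lam i),
        cle n (nextP n lam (fillingOfTau n lam tcol) i k t)
          ((fillingOfTau n lam tcol).Cp i k t) := by
  have heq : ∀ t ∈ Icc 1 (conjC n lam i),
      nextP n lam (fillingOfTau n lam tcol) i k t = (fillingOfTau n lam tcol).Cp i k t := by
    intro t ht
    rw [fillingOfTau_Cp hi hk ht]
    by_cases hkd : k < conjC n lam i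
    · rw [nextP_of_lt hkd, fillingOfTau_Cp hi (by rw [mem_Icc] at hk ⊢; omega) ht]
    · rw [show k = conjC n lam i by rw [mem_Icc] at hk; omega]
      exact compressEq_fillingOfTau.nextP_self hi ht
  exact ⟨⟨[], List.isChain_nil, by simp, heq⟩,
    fun t ht => (congrArg (mval n) (heq t ht)).le⟩

theorem memT_fillingOfTau (hτ : TauCond n lam tcol) : MemT n lam (fillingOfTau n lam tcol) :=
  ⟨fun _ hi => colCond_fillingOfTau hτ hi, fun _ hi _ hj => unprimedRel_fillingOfTau hτ hi hj,
    fun _ hi _ hk => primedRel_fillingOfTau hi hk⟩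

end FillingOfTau

theorem FillC.eq_of_normF {n : ℕ} {lam : ℕ → ℕ} {F G : FillC} (hF : NormF n lam F)
    (hG : NormF n lam G)
    (hCc : ∀ i ∈ Icc 1 (lam 1), ∀ j ∈ jRange n lam i, ∀ t ∈ Icc 1 (conjC n lam i),
      F.Cc i j t = G.Cc i j t)
    (hCp : ∀ i ∈ Icc 1 (lam 1), ∀ k ∈ Icc 2 (conjC n lam i),
      ∀ t ∈ Icc 1 (conjC n lam i), F.Cp i k t = G.Cp i k t) : F = G := by
  obtain ⟨Fc, Fp⟩ := F
  obtain ⟨Gc, Gp⟩ := G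
  congr <;> funext i j t
  · by_cases h : i ∈ Icc 1 (lam 1) ∧ j ∈ jRange n lam i ∧ t ∈ Icc 1 (conjC n lam i)
    · exact hCc i h.1 j h.2.1 t h.2.2
    · exact (hF.1 i j t h).trans (hG.1 i j t h).symm
  · by_cases h :
        i ∈ Icc 1 (lam 1) ∧ j ∈ Icc 2 (conjC n lam i) ∧ t ∈ Icc 1 (conjC n lam i)
    · exact hCp i h.1 j h.2.1 t h.2.2
    · exact (hF.2 i j t h).trans (hG.2 i j t h).symm

namespace MemT

variable {n : ℕ} {lam : ℕ → ℕ} {tcol : ℕ → ℕ → ℤ} {F : FillC} {i t : ℕ}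

theorem Cp_eq (hF : MemT n lam F) (hC : CompressEq n lam F tcol) (hτ : TauCond n lam tcol)
    (hi : i ∈ Icc 1 (lam 1)) {k : ℕ} (hk : k ∈ Icc 2 (conjC n lam i))
    (ht : t ∈ Icc 1 (conjC n lam i)) : F.Cp i k t = tcol i t := by
  have hanti : AntitoneOn (fun k => mval n (nextP n lam F i k t)) (Set.Icc 1 (conjC n lam i)) :=
    antitoneOn_Icc_of_succ_le fun k hk hkd => by
      have := (hF.2.2 i hi (k + 1) (mem_Icc.2 ⟨by omega, hkd⟩)).2 t ht
      rwa [← nextP_of_lt hkd] at this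
  rw [mem_Icc] at hk
  have hk' : F.Cp i k t = nextP n lam F i (k - 1) t := by
    rw [nextP_of_lt (by omega), Nat.sub_add_cancel (by omega)]
  have hvalid := ((hF.1 i hi).2 k (mem_Icc.2 hk)).1 t ht
  rw [hk'] at hvalid ⊢
  refine eq_of_mval_eq hvalid (hτ.1 i hi t ht) (le_antisymm ?_ ?_)
  · simpa only [hC.nextP_one hi ht] using
      hanti ⟨le_rfl, by omega⟩ ⟨by omega, by omega⟩ (by omega : 1 ≤ k - 1)
  · simpa only [hC.nextP_self hi ht] using
      hanti ⟨by omega, by omega⟩ ⟨by omega, le_rfl⟩ (by omega : k - 1 ≤ conjC n lam i)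

theorem Cc_eq_of_le (hF : MemT n lam F) (hC : CompressEq n lam F tcol)
    (hi : i ∈ Icc 2 (lam 1)) {j : ℕ} (hj : 1 ≤ j) (hjt : j ≤ t) (ht : t ≤ conjC n lam i) :
    F.Cc i j t = tcol i t := by
  induction j, hj using Nat.le_induction with
  | base => exact (hC i (Icc_subset_Icc_left one_le_two hi) t (mem_Icc.2 ⟨hjt, ht⟩)).2
  | succ j hj ih =>
    have hrel := (hF.2.1 i hi j (mem_Icc.2 ⟨hj, (by omega : j ≤ conjC n lam i)⟩)).1
    rw [← nextU_of_lt (by omega : j < conjC n lam i),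
      hrel.apply_of_gt (mem_Icc.2 ⟨by omega, ht⟩) (by omega)]
    exact ih (by omega)

theorem Cc_eq_of_lt (hF : MemT n lam F) (hC : CompressEq n lam F tcol)
    (hi : i ∈ Icc 2 (lam 1)) (hτ : TauCond n lam tcol) {j : ℕ}
    (hj : j ∈ Icc 1 (conjC n lam i))
    (hnext : ∀ r, 1 ≤ r → r ≤ j → nextU n lam F i j r = tcol (i - 1) r) (ht : 1 ≤ t)
    (htj : t < j) : F.Cc i j t = tcol (i - 1) t := by
  have hjd := (mem_Icc.1 hj).2
  have hrel := (hF.2.1 i hi j hj).1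
  refine (hrel.apply_of_lt hjd (fun r hr hrj => ?_) ht htj).trans (hnext t ht htj.le)
  rw [hnext r hr hrj.le, Cc_eq_of_le hF hC hi (mem_Icc.1 hj).1 le_rfl hjd]
  exact hτ.pred_ne_neg hi hr hrj hjd

theorem nextU_eq_of_le (hF : MemT n lam F) (hC : CompressEq n lam F tcol)
    (hi : i ∈ Icc 2 (lam 1)) (hτ : TauCond n lam tcol) {j : ℕ} (hjd : j ≤ conjC n lam i) :
    ∀ t, 1 ≤ t → t ≤ j → nextU n lam F i j t = tcol (i - 1) t := by
  refine Nat.decreasingInduction' (fun k hkd hjk ih t ht htk => ?_) hjd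
    fun t ht htd => hC.nextU_apply hi le_rfl (mem_Icc.2 ⟨ht, htd⟩)
  rw [nextU_of_lt hkd]
  exact Cc_eq_of_lt hF hC hi hτ (mem_Icc.2 ⟨by omega, hkd⟩) ih ht (by omega)

theorem Cc_eq (hF : MemT n lam F) (hC : CompressEq n lam F tcol)
    (hi : i ∈ Icc 2 (lam 1)) (hτ : TauCond n lam tcol) {j : ℕ}
    (hj : j ∈ Icc 1 (conjC n lam i)) (ht : t ∈ Icc 1 (conjC n lam i)) :
    F.Cc i j t = spliceCol (tcol (i - 1)) (tcol i) j t := by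
  rw [mem_Icc] at hj ht
  unfold spliceCol
  split_ifs with htj
  · exact Cc_eq_of_lt hF hC hi hτ (mem_Icc.2 hj) (nextU_eq_of_le hF hC hi hτ hj.2) ht.1 htj
  · exact Cc_eq_of_le hF hC hi hj.1 (by omega) ht.2

end MemT

theorem MemT.eq_fillingOfTau {n : ℕ} {lam : ℕ → ℕ} {tcol : ℕ → ℕ → ℤ} {F : FillC}
    (hF : MemT n lam F) (hN : NormF n lam F) (hC : CompressEq n lam F tcol)
    (hτ : TauCond n lam tcol) : F = fillingOfTau n lam tcol := by
  refine FillC.eq_of_normF hN normF_fillingOfTau (fun i hi j hj t ht => ?_)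
    (fun i hi k hk t ht => (hF.Cp_eq hC hτ hi hk ht).trans (fillingOfTau_Cp hi hk ht).symm)
  rw [fillingOfTau_Cc hi hj ht]
  by_cases hi1 : i = 1
  · subst hi1
    rw [jRange_one, mem_singleton] at hj
    subst hj
    rw [spliceCol, if_neg (by have := (mem_Icc.1 ht).1; omega)]
    exact (hC 1 hi t ht).2
  · rw [jRange_of_ne_one n lam hi1] at hj
    exact hF.Cc_eq hC (by rw [mem_Icc] at hi ⊢; omega) hτ hj ht

theorem unique_filling_compressing_to_tau_general (n : ℕ) (lam : ℕ → ℕ)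
    (tcol : ℕ → ℕ → ℤ) (hτ : TauCond n lam tcol) :
    ∃! F : FillC, MemT n lam F ∧ NormF n lam F ∧ CompressEq n lam F tcol :=
  ⟨fillingOfTau n lam tcol,
    ⟨memT_fillingOfTau hτ, normF_fillingOfTau, compressEq_fillingOfTau⟩,
    fun _ ⟨hF, hN, hC⟩ => hF.eq_fillingOfTau hN hC hτ⟩

theorem unique_filling_compressing_to_tau (n : ℕ) (lam : ℕ → ℕ) (hn : 2 ≤ n)
    (hstrict : ∀ i, 1 ≤ i → i < n → lam (i + 1) < lam i)
    (hpos : 0 < lam n) (hlen : ∀ i, n < i → lam i = 0)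
    (tcol : ℕ → ℕ → ℤ) (hτ : TauCond n lam tcol) :
    ∃! F : FillC, MemT n lam F ∧ NormF n lam F ∧ CompressEq n lam F tcol :=
  unique_filling_compressing_to_tau_general n lam tcol hτ

end Stmt15
end

section
/- In type A, suppose σ = f(w,T) for a folding pair (w,T) with the fixed λ-chain Γ. Then for each j with 2 ≤ j ≤ λ₁, the columns π_{j} and π_{j−1} of the filling (i.e. the words π_j(1)...π_j(λ'_j) and π_{j−1}(1)...π_{j−1}(λ'_{j−1})) do not attack each other: π_j(i) ≠ π_{j−1}(k) for all i < k, and all entries within π_j(1),...,π_j(λ'_j) are distinct; that is, the image f(w,T) is always a non-attacking filling. -/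
/-!
Write `π_{j-1} = π_j τ`, where `τ` is a product of transpositions `(a, b)` read off a sublist of
the factor `Γ_j`. Every such root satisfies `a ≤ λ'_{j-1} < b` (for the factor `Γ'(λ'_j)` this
uses `b ≥ λ'_j + 2`), and the first coordinates never increase along `Γ_j`, so the roots further
right act first. Under these two conditions `τ k ≥ k` for every `k ≤ λ'_{j-1}`: the only roots
that move `k` down are roots `(a, b)` with `b > λ'_{j-1}`, which `k` reaches only through an
earlier root `(k, b')`, and then `a ≥ k`. Hence `π_j(i) = π_{j-1}(k) = π_j(τ k)` forces
`i = τ k ≥ k`, which excludes `i < k`.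
-/

namespace Stmt18

def cells (n : ℕ) (lam : ℕ → ℕ) : Finset (ℕ × ℕ) :=
  (Finset.Icc 1 (n - 1)).biUnion fun i => {i} ×ˢ Finset.Icc 1 (lam i)

def conj (n : ℕ) (lam : ℕ → ℕ) (j : ℕ) : ℕ :=
  ((Finset.Icc 1 (n - 1)).filter fun i => j ≤ lam i).card

/-- the row ((a,n),(a,n-1),…,(a,k+1)) of the segment Γ(k) -/
def rowG (n a k : ℕ) : List (ℕ × ℕ) :=
  ((List.Ico (k + 1) (n + 1)).reverse).map fun b => (a, b)

/-- the same row with the last root (a,k+1) removed -/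
def rowG' (n a k : ℕ) : List (ℕ × ℕ) :=
  ((List.Ico (k + 2) (n + 1)).reverse).map fun b => (a, b)

/-- the segment Γ(k): rows a = k, k-1, …, 1 -/
def GammaSeg (n k : ℕ) : List (ℕ × ℕ) :=
  ((List.range k).reverse).flatMap fun a0 => rowG n (a0 + 1) k

/-- the segment Γ'(k) -/
def GammaSeg' (n k : ℕ) : List (ℕ × ℕ) :=
  ((List.range k).reverse).flatMap fun a0 => rowG' n (a0 + 1) k

open Classical in
/-- the factor Γ_j of the λ-chain: Γ'(λ'_j) if j is minimal with its conjugate value,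
Γ(λ'_j) otherwise -/
noncomputable def GammaFactor (n : ℕ) (lam : ℕ → ℕ) (j : ℕ) : List (ℕ × ℕ) :=
  if (∀ i, 1 ≤ i → conj n lam i = conj n lam j → j ≤ i) then
    GammaSeg' n (conj n lam j) else GammaSeg n (conj n lam j)

/-- the concatenation Γ_{λ₁} Γ_{λ₁ - 1} ⋯ Γ_j -/
noncomputable def GammaDown (n : ℕ) (lam : ℕ → ℕ) (j : ℕ) : List (ℕ × ℕ) :=
  ((List.range (lam 1 + 1 - j)).reverse).flatMap fun j0 => GammaFactor n lam (j0 + j)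

/-- the fixed λ-chain Γ = Γ_{λ₁} ⋯ Γ₂ -/
noncomputable def GammaChain (n : ℕ) (lam : ℕ → ℕ) : List (ℕ × ℕ) :=
  GammaDown n lam 2

/-- the product of the transpositions at the selected (global) positions of a prefix of Γ,
taken in order -/
noncomputable def prodSel (L : List (ℕ × ℕ)) (J : Finset ℕ) : Equiv.Perm ℕ :=
  (((L.zipIdx.map Prod.swap).filter fun q => q.1 ∈ J).map fun q => Equiv.swap q.2.1 q.2.2).prod

/-- π_j = w T_{λ₁} ⋯ T_{j+1} -/
noncomputable def piPerm (n : ℕ) (lam : ℕ → ℕ) (w : Equiv.Perm ℕ) (J : Finset ℕ)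
    (j : ℕ) : Equiv.Perm ℕ :=
  w * prodSel (GammaDown n lam (j + 1)) J

/-- the filling map: f(w,T)(i,j) = π_j(i) -/
noncomputable def fillingMap (n : ℕ) (lam : ℕ → ℕ) (w : Equiv.Perm ℕ) (J : Finset ℕ) :
    ℕ × ℕ → ℕ :=
  fun c => piPerm n lam w J c.2 c.1

/-- w is a permutation of {1,…,n} (an element of S_n) -/
def IsSnPerm (n : ℕ) (w : Equiv.Perm ℕ) : Prop :=
  ∀ i : ℕ, (i ∈ Finset.Icc 1 n → w i ∈ Finset.Icc 1 n) ∧ (i ∉ Finset.Icc 1 n → w i = i)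

def Attack (c d : ℕ × ℕ) : Prop :=
  c ≠ d ∧ (c.2 = d.2 ∨ (c.2 = d.2 + 1 ∧ c.1 < d.1) ∨ (d.2 = c.2 + 1 ∧ d.1 < c.1))

open List

noncomputable def prodSwaps (L : List (ℕ × ℕ)) : Equiv.Perm ℕ :=
  (L.map fun p => Equiv.swap p.1 p.2).prod

lemma le_prodSwaps_apply {m : ℕ} (L : List (ℕ × ℕ)) (hL : ∀ p ∈ L, p.1 ≤ m ∧ m < p.2)
    (hsorted : L.Pairwise fun p q => q.1 ≤ p.1) {k : ℕ} (hk : k ≤ m) :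
    k ≤ prodSwaps L k := by
  suffices H : ∀ k ≤ m, k ≤ prodSwaps L k ∧ ((∀ p ∈ L, p.1 < k) → prodSwaps L k = k) from
    (H k hk).1
  induction L with
  | nil => simp [prodSwaps]
  | cons p L ih =>
    obtain ⟨hp_max, hsorted⟩ := pairwise_cons.mp hsorted
    obtain ⟨hp1, hp2⟩ := hL p mem_cons_self
    intro k hk
    obtain ⟨hle, hfix⟩ := ih (fun q hq => hL q (mem_cons_of_mem _ hq)) hsorted k hk
    have hcons : prodSwaps (p :: L) k = Equiv.swap p.1 p.2 (prodSwaps L k) := by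
      simp only [prodSwaps, map_cons, prod_cons, Equiv.Perm.mul_apply]
    have hdown : prodSwaps L k = p.2 → k ≤ p.1 := fun h => by
      by_contra! hlt
      have := hfix fun q hq => (hp_max q hq).trans_lt hlt
      omega
    refine ⟨?_, fun hall => ?_⟩
    · rw [hcons, Equiv.swap_apply_def]
      split_ifs <;> omega
    · have hpk := hall p mem_cons_self
      rw [hcons, hfix fun q hq => hall q (mem_cons_of_mem _ hq),
        Equiv.swap_apply_of_ne_of_ne (by omega) (by omega)]

lemma prodSel_append (A B : List (ℕ × ℕ)) (J : Finset ℕ) :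
    ∃ L, L.Sublist B ∧ prodSel (A ++ B) J = prodSel A J * prodSwaps L := by
  refine ⟨(((B.zipIdx A.length).map Prod.swap).filter fun q => q.1 ∈ J).map Prod.snd, ?_, ?_⟩
  · have h := (filter_sublist (p := fun q : ℕ × (ℕ × ℕ) => decide (q.1 ∈ J))
      (l := (B.zipIdx A.length).map Prod.swap)).map Prod.snd
    rwa [map_map, show Prod.snd ∘ Prod.swap = (Prod.fst : (ℕ × ℕ) × ℕ → ℕ × ℕ) from rfl,
      zipIdx_map_fst] at h
  · simp only [prodSel, prodSwaps, zipIdx_append, map_append, filter_append, prod_append,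
      map_map, zero_add]
    rfl

lemma pairwise_fst_ge_flatMap_range (A : ℕ) (g : ℕ → List ℕ) :
    (((List.range A).reverse).flatMap fun a0 => (g a0).map fun b => (a0 + 1, b)).Pairwise
      fun p q => q.1 ≤ p.1 := by
  rw [pairwise_flatMap]
  refine ⟨fun a0 _ => ?_, ?_⟩
  · rw [pairwise_map]
    exact pairwise_of_forall fun _ _ => le_rfl
  · refine (pairwise_reverse.mpr (pairwise_lt_range (n := A))).imp fun hlt x hx y hy => ?_
    simp only [mem_map] at hx hy
    obtain ⟨b, -, rfl⟩ := hx
    obtain ⟨c, -, rfl⟩ := hy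
    simp only
    omega

lemma mem_GammaSeg {n k : ℕ} {p : ℕ × ℕ} (hp : p ∈ GammaSeg n k) : p.1 ≤ k ∧ k < p.2 := by
  simp only [GammaSeg, rowG, mem_flatMap, mem_reverse, mem_range, mem_map, List.Ico.mem] at hp
  obtain ⟨a0, ha0, b, hb, rfl⟩ := hp
  exact ⟨by omega, by omega⟩

lemma mem_GammaSeg' {n k : ℕ} {p : ℕ × ℕ} (hp : p ∈ GammaSeg' n k) : p.1 ≤ k ∧ k + 1 < p.2 := by
  simp only [GammaSeg', rowG', mem_flatMap, mem_reverse, mem_range, mem_map, List.Ico.mem] at hp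
  obtain ⟨a0, ha0, b, hb, rfl⟩ := hp
  exact ⟨by omega, by omega⟩

lemma GammaDown_split (n : ℕ) (lam : ℕ → ℕ) {j : ℕ} (hj : j ≤ lam 1) :
    GammaDown n lam j = GammaDown n lam (j + 1) ++ GammaFactor n lam j := by
  rw [GammaDown, GammaDown, show lam 1 + 1 - j = (lam 1 + 1 - (j + 1)) + 1 by omega,
    range_succ_eq_map, reverse_cons, flatMap_append, ← map_reverse, flatMap_map]
  simp only [flatMap_singleton, zero_add]
  congr 2
  funext x
  rw [Nat.succ_eq_add_one, add_assoc, add_comm 1 j]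

section Conjugate

variable {n : ℕ} {lam : ℕ → ℕ}

lemma conj_antitone : Antitone (conj n lam) := fun _ _ h =>
  Finset.card_le_card (Finset.monotone_filter_right _ fun _ _ hi => h.trans hi)

variable (hstrict : ∀ i, 1 ≤ i → i < n - 1 → lam (i + 1) < lam i)
include hstrict

lemma strictAntiOn_lam : StrictAntiOn lam (Set.Icc 1 (n - 1)) :=
  strictAntiOn_of_add_one_lt Set.ordConnected_Icc fun a _ ha ha1 =>
    hstrict a ha.1 (by simp only [Set.mem_Icc] at ha1; omega)

lemma le_conj_of_le_lam {i j : ℕ} (hi : i ∈ Set.Icc 1 (n - 1)) (hj : j ≤ lam i) :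
    i ≤ conj n lam j := by
  have hsub : Finset.Icc 1 i ⊆ (Finset.Icc 1 (n - 1)).filter fun i' => j ≤ lam i' := by
    intro x hx
    simp only [Finset.mem_Icc, Finset.mem_filter] at hx ⊢
    have hx' : x ∈ Set.Icc 1 (n - 1) := ⟨hx.1, hx.2.trans hi.2⟩
    exact ⟨hx', hj.trans ((strictAntiOn_lam hstrict).antitoneOn hx' hi hx.2)⟩
  simpa [conj] using Finset.card_le_card hsub

lemma conj_pred_le {j : ℕ} : conj n lam (j - 1) ≤ conj n lam j + 1 := by
  have hsub : (Finset.Icc 1 (n - 1)).filter (fun i => j - 1 ≤ lam i) ⊆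
      (Finset.Icc 1 (n - 1)).filter (fun i => j ≤ lam i) ∪
        (Finset.Icc 1 (n - 1)).filter (fun i => lam i = j - 1) := by
    intro x hx
    simp only [Finset.mem_filter, Finset.mem_union] at hx ⊢
    exact (le_or_gt j (lam x)).imp (fun h => ⟨hx.1, h⟩) fun h => ⟨hx.1, by omega⟩
  have hone : ((Finset.Icc 1 (n - 1)).filter fun i => lam i = j - 1).card ≤ 1 :=
    Finset.card_le_one.mpr fun a ha b hb => by
      simp only [Finset.mem_filter] at ha hb
      exact (strictAntiOn_lam hstrict).injOn (by simpa using ha.1) (by simpa using hb.1)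
        (ha.2.trans hb.2.symm)
  exact (Finset.card_le_card hsub).trans ((Finset.card_union_le _ _).trans (by
    unfold conj; omega))

lemma GammaFactor_roots {j : ℕ} (hj : 2 ≤ j) {p : ℕ × ℕ} (hp : p ∈ GammaFactor n lam j) :
    p.1 ≤ conj n lam (j - 1) ∧ conj n lam (j - 1) < p.2 := by
  have hanti : conj n lam j ≤ conj n lam (j - 1) := conj_antitone (Nat.sub_le j 1)
  have hpred := conj_pred_le hstrict (j := j)
  unfold GammaFactor at hp
  split_ifs at hp with hmin
  · have := mem_GammaSeg' hp
    omega
  · have hconj : conj n lam (j - 1) = conj n lam j := by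
      by_contra hne
      refine hmin fun i hi hij => ?_
      by_contra! hlt
      have := conj_antitone (n := n) (lam := lam) (show i ≤ j - 1 by omega)
      omega
    have := mem_GammaSeg hp
    omega

end Conjugate

lemma GammaFactor_pairwise (n : ℕ) (lam : ℕ → ℕ) (j : ℕ) :
    (GammaFactor n lam j).Pairwise fun p q => q.1 ≤ p.1 := by
  unfold GammaFactor
  split <;> exact pairwise_fst_ge_flatMap_range _ _

lemma piPerm_pred_eq (n : ℕ) (lam : ℕ → ℕ) (w : Equiv.Perm ℕ) (J : Finset ℕ) {j : ℕ}
    (hj : 1 ≤ j) (hjl : j ≤ lam 1) :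
    ∃ L, L.Sublist (GammaFactor n lam j) ∧
      piPerm n lam w J (j - 1) = piPerm n lam w J j * prodSwaps L := by
  obtain ⟨L, hL, hprod⟩ := prodSel_append (GammaDown n lam (j + 1)) (GammaFactor n lam j) J
  refine ⟨L, hL, ?_⟩
  rw [piPerm, piPerm, Nat.sub_add_cancel hj, GammaDown_split n lam hjl, hprod, mul_assoc]

theorem piPerm_ne_piPerm_pred {n : ℕ} {lam : ℕ → ℕ}
    (hstrict : ∀ i, 1 ≤ i → i < n - 1 → lam (i + 1) < lam i) (w : Equiv.Perm ℕ)
    (J : Finset ℕ) {j i k : ℕ} (hj : 2 ≤ j) (hjl : j ≤ lam 1) (hik : i < k)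
    (hk : k ≤ conj n lam (j - 1)) :
    piPerm n lam w J j i ≠ piPerm n lam w J (j - 1) k := by
  obtain ⟨L, hL, hpi⟩ := piPerm_pred_eq n lam w J (by omega) hjl
  have hτ : k ≤ prodSwaps L k :=
    le_prodSwaps_apply L (fun p hp => GammaFactor_roots hstrict hj (hL.subset hp))
      ((GammaFactor_pairwise n lam j).sublist hL) hk
  rw [hpi, Equiv.Perm.mul_apply]
  intro h
  have := (piPerm n lam w J j).injective h
  omega

lemma mem_cells {n : ℕ} {lam : ℕ → ℕ} {c : ℕ × ℕ} (hc : c ∈ cells n lam) :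
    c.1 ∈ Set.Icc 1 (n - 1) ∧ 1 ≤ c.2 ∧ c.2 ≤ lam c.1 := by
  simp only [cells, Finset.mem_biUnion, Finset.mem_product, Finset.mem_singleton,
    Finset.mem_Icc] at hc
  obtain ⟨i, hi, rfl, hc⟩ := hc
  exact ⟨hi, hc⟩

theorem fillingMap_ne_of_adjacent {n : ℕ} {lam : ℕ → ℕ}
    (hstrict : ∀ i, 1 ≤ i → i < n - 1 → lam (i + 1) < lam i) (w : Equiv.Perm ℕ)
    (J : Finset ℕ) {c d : ℕ × ℕ} (hc : c ∈ cells n lam) (hd : d ∈ cells n lam)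
    (hcol : c.2 = d.2 + 1) (hrow : c.1 < d.1) :
    fillingMap n lam w J c ≠ fillingMap n lam w J d := by
  obtain ⟨hc1, -, hc2⟩ := mem_cells hc
  obtain ⟨hd1, hd2, hd3⟩ := mem_cells hd
  have hlam : lam c.1 ≤ lam 1 :=
    (strictAntiOn_lam hstrict).antitoneOn ⟨le_rfl, hc1.1.trans hc1.2⟩ hc1 hc1.1
  have hk : d.1 ≤ conj n lam (c.2 - 1) := by
    rw [hcol, Nat.add_sub_cancel]
    exact le_conj_of_le_lam hstrict hd1 hd3
  have := piPerm_ne_piPerm_pred hstrict w J (by omega) (hc2.trans hlam) hrow hk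
  rw [hcol, Nat.add_sub_cancel] at this
  rwa [fillingMap, fillingMap, hcol]

theorem filling_map_lands_in_nonattacking_general (n : ℕ) (lam : ℕ → ℕ)
    (hstrict : ∀ i, 1 ≤ i → i < n - 1 → lam (i + 1) < lam i)
    (w : Equiv.Perm ℕ)
    (J : Finset ℕ) :
    (∀ j, 2 ≤ j → j ≤ lam 1 →
      ∀ i k, 1 ≤ i → i ≤ conj n lam j → 1 ≤ k → k ≤ conj n lam (j - 1) → i < k →
        piPerm n lam w J j i ≠ piPerm n lam w J (j - 1) k) ∧
    (∀ j, 1 ≤ j → j ≤ lam 1 →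
      ∀ i k, 1 ≤ i → i ≤ conj n lam j → 1 ≤ k → k ≤ conj n lam j → i ≠ k →
        piPerm n lam w J j i ≠ piPerm n lam w J j k) ∧
    (∀ c ∈ cells n lam, ∀ d ∈ cells n lam, Attack c d →
      fillingMap n lam w J c ≠ fillingMap n lam w J d) := by
  refine ⟨fun j hj hjl i k _ _ _ hk hik => piPerm_ne_piPerm_pred hstrict w J hj hjl hik hk,
    fun j _ _ i k _ _ _ _ hik h => hik ((piPerm n lam w J j).injective h), ?_⟩
  rintro c hc d hd ⟨hne, hcol | ⟨hcol, hrow⟩ | ⟨hcol, hrow⟩⟩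
  · intro h
    rw [fillingMap, fillingMap, hcol] at h
    exact hne (Prod.ext ((piPerm n lam w J d.2).injective h) hcol)
  · exact fillingMap_ne_of_adjacent hstrict w J hc hd hcol hrow
  · exact (fillingMap_ne_of_adjacent hstrict w J hd hc hcol hrow).symm

theorem filling_map_lands_in_nonattacking (n : ℕ) (lam : ℕ → ℕ) (hn : 2 ≤ n)
    (hstrict : ∀ i, 1 ≤ i → i < n - 1 → lam (i + 1) < lam i)
    (hpos : 0 < lam (n - 1))
    (w : Equiv.Perm ℕ) (hw : IsSnPerm n w)
    (J : Finset ℕ) (hJ : J ⊆ Finset.range (GammaChain n lam).length) :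
    (∀ j, 2 ≤ j → j ≤ lam 1 →
      ∀ i k, 1 ≤ i → i ≤ conj n lam j → 1 ≤ k → k ≤ conj n lam (j - 1) → i < k →
        piPerm n lam w J j i ≠ piPerm n lam w J (j - 1) k) ∧
    (∀ j, 1 ≤ j → j ≤ lam 1 →
      ∀ i k, 1 ≤ i → i ≤ conj n lam j → 1 ≤ k → k ≤ conj n lam j → i ≠ k →
        piPerm n lam w J j i ≠ piPerm n lam w J j k) ∧
    (∀ c ∈ cells n lam, ∀ d ∈ cells n lam, Attack c d →
      fillingMap n lam w J c ≠ fillingMap n lam w J d) :=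
  filling_map_lands_in_nonattacking_general n lam hstrict w J

end Stmt18
end
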